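/- arXiv:1806.03332 — 11 statements merged into one kernel-verified Lean document; each statement's English description precedes it below -/
import Mathlib

section
/- Let 𝒳 be a nonempty finite set, let P be a probability mass function on 𝒳, and let α ∈ (1,∞). Then the maximum over all probability mass functions Q on 𝒳 of ∑_{x∈𝒳} P(x)·Q(x)^{(α−1)/α} equals (∑_{x∈𝒳} P(x)^α)^{1/α}. -/
open Real BigOperators

/-- A probability mass function on a finite set: nonnegative and sums to 1. -/
def IsPMF {X : Type} [Fintype X] (P : X → ℝ) : Prop :=
  (∀ x, 0 ≤ P x) ∧ ∑ x, P x = 1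

/-!
Hölder's inequality with exponents `α` and `α / (α - 1)` bounds `∑ P Q^{(α-1)/α}` by
`‖P‖_α ‖Q‖_1^{(α-1)/α} = ‖P‖_α`. Equality holds for the tilted distribution `Q ∝ P^α`,
which is where the KKT conditions of the concave program point.
-/

section

variable {X : Type} [Fintype X]

theorem IsPMF.sum_rpow_pos {P : X → ℝ} (hP : IsPMF P) (α : ℝ) : 0 < ∑ x, P x ^ α := by
  obtain ⟨x, -, hx⟩ : ∃ x ∈ Finset.univ, 0 < P x := by
    by_contra! h
    have h0 : ∑ x, P x = 0 := Finset.sum_eq_zero fun x hx => le_antisymm (h x hx) (hP.1 x)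
    linarith [hP.2]
  exact Finset.sum_pos' (fun y _ => rpow_nonneg (hP.1 y) α)
    ⟨x, Finset.mem_univ x, rpow_pos_of_pos hx α⟩

theorem sum_mul_rpow_inv_le_of_isPMF {p q : ℝ} (hpq : p.HolderConjugate q) {P Q : X → ℝ}
    (hP : ∀ x, 0 ≤ P x) (hQ : IsPMF Q) :
    ∑ x, P x * Q x ^ q⁻¹ ≤ (∑ x, P x ^ p) ^ (1 / p) := by
  have holder := inner_le_Lp_mul_Lq_of_nonneg Finset.univ hpq (fun x _ => hP x)
    (fun x _ => rpow_nonneg (hQ.1 x) q⁻¹)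
  have hQq : ∑ x, (Q x ^ q⁻¹) ^ q = 1 := by
    simp only [rpow_inv_rpow (hQ.1 _) hpq.symm.ne_zero, hQ.2]
  rwa [hQq, one_rpow, mul_one] at holder

theorem mul_rpow_rpow_sub_one_div {x : ℝ} (hx : 0 ≤ x) {α : ℝ} (hα : α ≠ 0) :
    x * (x ^ α) ^ ((α - 1) / α) = x ^ α := by
  rcases hx.eq_or_lt with rfl | hx
  · simp [zero_rpow hα]
  · rw [← rpow_mul hx.le, mul_div_cancel₀ _ hα, rpow_sub_one hx.ne', mul_div_cancel₀ _ hx.ne']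

noncomputable def tilted (P : X → ℝ) (α : ℝ) (x : X) : ℝ := P x ^ α / ∑ y, P y ^ α

theorem IsPMF.isPMF_tilted {P : X → ℝ} (hP : IsPMF P) (α : ℝ) : IsPMF (tilted P α) :=
  ⟨fun x => div_nonneg (rpow_nonneg (hP.1 x) α) (hP.sum_rpow_pos α).le,
    by simp only [tilted, ← Finset.sum_div]; exact div_self (hP.sum_rpow_pos α).ne'⟩

theorem IsPMF.sum_mul_tilted_rpow {P : X → ℝ} (hP : IsPMF P) {α : ℝ} (hα : α ≠ 0) :
    ∑ x, P x * tilted P α x ^ ((α - 1) / α) = (∑ x, P x ^ α) ^ (1 / α) := by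
  have hS : 0 < ∑ x, P x ^ α := hP.sum_rpow_pos α
  simp only [tilted]
  set S := ∑ x, P x ^ α
  calc ∑ x, P x * (P x ^ α / S) ^ ((α - 1) / α)
      = ∑ x, P x * (P x ^ α) ^ ((α - 1) / α) / S ^ ((α - 1) / α) := by
        simp only [div_rpow (rpow_nonneg (hP.1 _) α) hS.le, mul_div_assoc]
    _ = S / S ^ ((α - 1) / α) := by
        rw [← Finset.sum_div]
        simp only [mul_rpow_rpow_sub_one_div (hP.1 _) hα, S]
    _ = S ^ (1 / α) := by
        nth_rw 1 [← rpow_one S]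
        rw [← rpow_sub hS, one_sub_div hα, sub_sub_cancel]

end

theorem max_tilted_value_general {X : Type} [Fintype X]
    (P : X → ℝ) (hP : IsPMF P) (α : ℝ) (hα : 1 < α) :
    IsGreatest
      {v : ℝ | ∃ Q : X → ℝ, IsPMF Q ∧ v = ∑ x, P x * Q x ^ ((α - 1) / α)}
      ((∑ x, P x ^ α) ^ (1 / α)) := by
  have hα0 : α ≠ 0 := by positivity
  refine ⟨⟨tilted P α, hP.isPMF_tilted α, (hP.sum_mul_tilted_rpow hα0).symm⟩, ?_⟩
  rintro v ⟨Q, hQ, rfl⟩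
  have := sum_mul_rpow_inv_le_of_isPMF (HolderConjugate.conjExponent hα) hP.1 hQ
  rwa [conjExponent, inv_div] at this

/-- the maximum over all pmfs `Q` on `X` of
`∑ x, P x * Q x ^ ((α-1)/α)` equals `(∑ x, P x ^ α) ^ (1/α)`. -/
theorem max_tilted_value {X : Type} [Fintype X] [Nonempty X]
    (P : X → ℝ) (hP : IsPMF P) (α : ℝ) (hα : 1 < α) :
    IsGreatest
      {v : ℝ | ∃ Q : X → ℝ, IsPMF Q ∧ v = ∑ x, P x * Q x ^ ((α - 1) / α)}
      ((∑ x, P x ^ α) ^ (1 / α)) :=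
  max_tilted_value_general P hP α hα
end

section
/- Let 𝒳 and 𝒴 be nonempty finite sets, let P_{XY} be a joint probability mass function on 𝒳×𝒴, and let α ∈ (1,∞). Then the maximum over all channels Q from 𝒴 to 𝒳 (i.e., families (Q(·|y))_{y∈𝒴} of probability mass functions on 𝒳) of ∑_{x∈𝒳, y∈𝒴} P_{XY}(x,y)·Q(x|y)^{(α−1)/α} equals ∑_{y∈𝒴} (∑_{x∈𝒳} P_{XY}(x,y)^α)^{1/α}. -/
open Real BigOperators

/-- A joint probability mass function on `X × Y`. -/
def IsJointPMF {X Y : Type} [Fintype X] [Fintype Y] (P : X → Y → ℝ) : Prop :=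
  (∀ x y, 0 ≤ P x y) ∧ ∑ x, ∑ y, P x y = 1

/-!
The problem decouples over `y`: for a fixed nonnegative column `p = P(·, y)` one maximizes
`∑ x, p x * q x ^ ((α - 1) / α)` over distributions `q`. Hölder's inequality with the conjugate
exponents `α` and `α / (α - 1)` bounds this by `‖p‖_α * (∑ x, q x) ^ ((α - 1) / α) = ‖p‖_α`, and
the tilted distribution `q ∝ p ^ α` attains the bound.
-/

namespace IsPMF

variable {ι : Type} [Fintype ι]

lemma uniform [Nonempty ι] : IsPMF fun _ : ι => (Fintype.card ι : ℝ)⁻¹ := by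
  refine ⟨fun _ => by positivity, ?_⟩
  rw [Finset.sum_const, Finset.card_univ, nsmul_eq_mul,
    mul_inv_cancel₀ (Nat.cast_ne_zero.2 Fintype.card_ne_zero)]

lemma tilted {p : ι → ℝ} (hp : ∀ i, 0 ≤ p i) {α : ℝ} (hS : ∑ j, p j ^ α ≠ 0) :
    IsPMF fun i => p i ^ α / ∑ j, p j ^ α :=
  ⟨fun i => div_nonneg (rpow_nonneg (hp i) α) (Finset.sum_nonneg fun j _ => rpow_nonneg (hp j) α),
    by rw [← Finset.sum_div, div_self hS]⟩

end IsPMF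

section TiltedValue

variable {ι : Type} [Fintype ι] {p : ι → ℝ} {α : ℝ}

lemma sum_mul_rpow_le_of_isPMF (hp : ∀ i, 0 ≤ p i) (hα : 1 < α) {q : ι → ℝ} (hq : IsPMF q) :
    ∑ i, p i * q i ^ ((α - 1) / α) ≤ (∑ i, p i ^ α) ^ (1 / α) := by
  have hα₁ : α - 1 ≠ 0 := (sub_pos.2 hα).ne'
  have hα₀ : α ≠ 0 := (zero_lt_one.trans hα).ne'
  have hq_pow : ∀ i, (q i ^ ((α - 1) / α)) ^ (α / (α - 1)) = q i := fun i => by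
    rw [← rpow_mul (hq.1 i), div_mul_div_cancel₀ hα₀, div_self hα₁, rpow_one]
  calc ∑ i, p i * q i ^ ((α - 1) / α)
      ≤ (∑ i, p i ^ α) ^ (1 / α) *
          (∑ i, (q i ^ ((α - 1) / α)) ^ (α / (α - 1))) ^ (1 / (α / (α - 1))) :=
        inner_le_Lp_mul_Lq_of_nonneg Finset.univ (HolderConjugate.conjExponent hα)
          (fun i _ => hp i) (fun i _ => rpow_nonneg (hq.1 i) _)
    _ = (∑ i, p i ^ α) ^ (1 / α) := by simp only [hq_pow, hq.2, one_rpow, mul_one]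

lemma sum_mul_tilted_rpow (hp : ∀ i, 0 ≤ p i) (hα : α ≠ 0) (hS : 0 < ∑ j, p j ^ α) :
    ∑ i, p i * (p i ^ α / ∑ j, p j ^ α) ^ ((α - 1) / α) = (∑ j, p j ^ α) ^ (1 / α) := by
  set S := ∑ j, p j ^ α
  have hterm : ∀ i, p i * (p i ^ α / S) ^ ((α - 1) / α) = p i ^ α / S ^ ((α - 1) / α) := fun i => by
    rw [div_rpow (rpow_nonneg (hp i) α) hS.le, ← rpow_mul (hp i), mul_div_cancel₀ _ hα,
      ← mul_div_assoc, ← rpow_one_add' (hp i) (by simpa using hα), add_sub_cancel]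
  rw [Finset.sum_congr rfl fun i _ => hterm i, ← Finset.sum_div,
    show 1 / α = 1 - (α - 1) / α by field_simp; ring, rpow_sub hS, rpow_one]

lemma exists_isPMF_sum_mul_rpow_eq [Nonempty ι] (hp : ∀ i, 0 ≤ p i) (hα : 1 < α) :
    ∃ q, IsPMF q ∧ ∑ i, p i * q i ^ ((α - 1) / α) = (∑ i, p i ^ α) ^ (1 / α) := by
  rcases (Finset.sum_nonneg fun j _ => rpow_nonneg (hp j) α).eq_or_lt with hS | hS
  · have hp0 : ∀ i, p i = 0 := fun i =>
      (rpow_eq_zero (hp i) (zero_lt_one.trans hα).ne').1 <|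
        (Finset.sum_eq_zero_iff_of_nonneg fun j _ => rpow_nonneg (hp j) α).1 hS.symm i
          (Finset.mem_univ i)
    refine ⟨_, IsPMF.uniform, ?_⟩
    rw [← hS, zero_rpow (one_div_pos.2 (zero_lt_one.trans hα)).ne']
    simp [hp0]
  · exact ⟨_, IsPMF.tilted hp hS.ne', sum_mul_tilted_rpow hp (zero_lt_one.trans hα).ne' hS⟩

end TiltedValue

theorem max_tilted_channel_value_general {X Y : Type} [Fintype X] [Fintype Y]
    [Nonempty X]
    (P : X → Y → ℝ) (hP : IsJointPMF P) (α : ℝ) (hα : 1 < α) :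
    IsGreatest
      {v : ℝ | ∃ Q : Y → X → ℝ, (∀ y, IsPMF (Q y)) ∧
        v = ∑ x, ∑ y, P x y * Q y x ^ ((α - 1) / α)}
      (∑ y, (∑ x, P x y ^ α) ^ (1 / α)) := by
  have hcol : ∀ y x, 0 ≤ P x y := fun y x => hP.1 x y
  constructor
  · choose Q hQ hval using fun y => exists_isPMF_sum_mul_rpow_eq (hcol y) hα
    exact ⟨Q, hQ, by rw [Finset.sum_comm]; exact Finset.sum_congr rfl fun y _ => (hval y).symm⟩
  · rintro v ⟨Q, hQ, rfl⟩
    rw [Finset.sum_comm]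
    exact Finset.sum_le_sum fun y _ => sum_mul_rpow_le_of_isPMF (hcol y) hα (hQ y)

/-- the maximum over all channels `Q` from `Y` to `X` of
`∑ x y, P x y * Q(x|y)^((α-1)/α)` equals `∑ y, (∑ x, P x y ^ α) ^ (1/α)`. -/
theorem max_tilted_channel_value {X Y : Type} [Fintype X] [Fintype Y]
    [Nonempty X] [Nonempty Y]
    (P : X → Y → ℝ) (hP : IsJointPMF P) (α : ℝ) (hα : 1 < α) :
    IsGreatest
      {v : ℝ | ∃ Q : Y → X → ℝ, (∀ y, IsPMF (Q y)) ∧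
        v = ∑ x, ∑ y, P x y * Q y x ^ ((α - 1) / α)}
      (∑ y, (∑ x, P x y ^ α) ^ (1 / α)) :=
  max_tilted_channel_value_general P hP α hα
end

section
/- Let 𝒳 and 𝒴 be nonempty finite sets and let P_{XY} be a joint probability mass function on 𝒳×𝒴 with X-marginal P_X. Then: (i) the maximum over all channels Q from 𝒴 to 𝒳 of ∑_{x,y} P_{XY}(x,y)·Q(x|y) equals ∑_{y∈𝒴} max_{x∈𝒳} P_{XY}(x,y); (ii) the maximum over all probability mass functions Q on 𝒳 of ∑_x P_X(x)·Q(x) equals max_{x∈𝒳} P_X(x); consequently the ∞-leakage L_∞(X→Y) = log [ (max over channels Q of ∑_{x,y} P_{XY}(x,y)Q(x|y)) / (max over pmfs Q of ∑_x P_X(x)Q(x)) ] equals log [ ∑_{y∈𝒴} max_{x∈𝒳} P_{XY}(x,y) / max_{x∈𝒳} P_X(x) ]. -/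
open Real BigOperators

lemma exists_sup_eq {X : Type} [Fintype X] [Nonempty X] (f : X → ℝ) :
    ∃ x0, (⨆ x, f x) = f x0 ∧ ∀ x, f x ≤ f x0 := by
  obtain ⟨x0, hx0⟩ := Finite.exists_max f
  refine ⟨x0, le_antisymm (ciSup_le hx0) (le_ciSup (Set.Finite.bddAbove (Set.finite_range f)) x0), hx0⟩

lemma le_sup' {X : Type} [Fintype X] [Nonempty X] (f : X → ℝ) (x : X) :
    f x ≤ ⨆ x, f x :=
  le_ciSup (Set.Finite.bddAbove (Set.finite_range f)) x

/-- (i) the max over channels of `∑ x y, P x y * Q(x|y)` is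
`∑ y, max_x P x y`; (ii) the max over pmfs of `∑ x, P_X x * Q x` is
`max_x P_X x`; consequently the ∞-leakage equals
`log (∑ y, max_x P x y / max_x P_X x)`. -/
theorem infty_leakage_eq_arimoto {X Y : Type} [Fintype X] [Fintype Y]
    [Nonempty X] [Nonempty Y]
    (P : X → Y → ℝ) (hP : IsJointPMF P) :
    IsGreatest
      {v : ℝ | ∃ Q : Y → X → ℝ, (∀ y, IsPMF (Q y)) ∧
        v = ∑ x, ∑ y, P x y * Q y x}
      (∑ y, ⨆ x, P x y) ∧
    IsGreatest
      {v : ℝ | ∃ Q : X → ℝ, IsPMF Q ∧ v = ∑ x, (∑ y, P x y) * Q x}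
      (⨆ x, ∑ y, P x y) ∧
    Real.log
      (sSup {v : ℝ | ∃ Q : Y → X → ℝ, (∀ y, IsPMF (Q y)) ∧
          v = ∑ x, ∑ y, P x y * Q y x} /
       sSup {v : ℝ | ∃ Q : X → ℝ, IsPMF Q ∧ v = ∑ x, (∑ y, P x y) * Q x})
    = Real.log ((∑ y, ⨆ x, P x y) / ⨆ x, ∑ y, P x y) := by
  classical
  have h1 : IsGreatest
      {v : ℝ | ∃ Q : Y → X → ℝ, (∀ y, IsPMF (Q y)) ∧
        v = ∑ x, ∑ y, P x y * Q y x}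
      (∑ y, ⨆ x, P x y) := by
    constructor
    · -- membership: pick argmax for each y
      choose x0 hx0 hmax using fun y => exists_sup_eq (fun x => P x y)
      refine ⟨fun y x => if x = x0 y then 1 else 0, ?_, ?_⟩
      · intro y
        constructor
        · intro x; dsimp only; split <;> norm_num
        · simp
      · rw [Finset.sum_comm]
        refine Finset.sum_congr rfl fun y _ => ?_
        rw [hx0 y]
        rw [Finset.sum_eq_single (x0 y)]
        · simp
        · intro b _ hb; simp [hb]
        · simp
    · rintro v ⟨Q, hQ, rfl⟩
      rw [Finset.sum_comm]
      refine Finset.sum_le_sum fun y _ => ?_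
      calc ∑ x, P x y * Q y x ≤ ∑ x, (⨆ x', P x' y) * Q y x := by
            refine Finset.sum_le_sum fun x _ => ?_
            exact mul_le_mul_of_nonneg_right (le_sup' (fun x' => P x' y) x) ((hQ y).1 x)
        _ = (⨆ x', P x' y) * ∑ x, Q y x := by rw [Finset.mul_sum]
        _ = ⨆ x', P x' y := by rw [(hQ y).2, mul_one]
  have h2 : IsGreatest
      {v : ℝ | ∃ Q : X → ℝ, IsPMF Q ∧ v = ∑ x, (∑ y, P x y) * Q x}
      (⨆ x, ∑ y, P x y) := by
    obtain ⟨x0, hx0, hmax⟩ := exists_sup_eq (fun x => ∑ y, P x y)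
    constructor
    · refine ⟨fun x => if x = x0 then 1 else 0, ⟨fun x => by dsimp only; split <;> norm_num, by simp⟩, ?_⟩
      rw [hx0, Finset.sum_eq_single x0]
      · simp
      · intro b _ hb; simp [hb]
      · simp
    · rintro v ⟨Q, hQ, rfl⟩
      calc ∑ x, (∑ y, P x y) * Q x ≤ ∑ x, (⨆ x', ∑ y, P x' y) * Q x := by
            refine Finset.sum_le_sum fun x _ => ?_
            exact mul_le_mul_of_nonneg_right (le_sup' (fun x' => ∑ y, P x' y) x) (hQ.1 x)
        _ = (⨆ x', ∑ y, P x' y) * ∑ x, Q x := by rw [Finset.mul_sum]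
        _ = ⨆ x', ∑ y, P x' y := by rw [hQ.2, mul_one]
  exact ⟨h1, h2, by rw [h1.csSup_eq, h2.csSup_eq]⟩
end

section
/- Let 𝒰, 𝒳, 𝒴 be nonempty finite sets, α ∈ (1,∞), W a channel from 𝒳 to 𝒴, f: 𝒰 → 𝒳 a function, and P_U a probability mass function on 𝒰. Let P_{UY}(u,y) = P_U(u)·W(y|f(u)) be the induced joint pmf on 𝒰×𝒴, and define the pmf Q on 𝒳 by Q(x) = (∑_{u: f(u)=x} P_U(u)^α) / (∑_{u∈𝒰} P_U(u)^α). Then the Arimoto mutual information of order α of P_{UY} equals the Sibson mutual information of order α of (Q, W): I_α^A(U;Y) = I_α^S(Q,W). -/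
open Real BigOperators

/-- Sibson mutual information of order α of input pmf `Q` and channel `W`. -/
noncomputable def sibsonMI (α : ℝ) {X Y : Type} [Fintype X] [Fintype Y]
    (Q : X → ℝ) (W : X → Y → ℝ) : ℝ :=
  (α / (α - 1)) * Real.log (∑ y, (∑ x, Q x * W x y ^ α) ^ (1 / α))

/-- Arimoto mutual information of order α of a joint pmf `P` on `U × Y`,
with `U`-marginal `u ↦ ∑ y, P u y`. -/
noncomputable def arimotoMI (α : ℝ) {U Y : Type} [Fintype U] [Fintype Y]
    (P : U → Y → ℝ) : ℝ :=
  (α / (α - 1)) * Real.log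
    ((∑ y, (∑ u, P u y ^ α) ^ (1 / α)) / (∑ u, (∑ y, P u y) ^ α) ^ (1 / α))

/-- if `U` is a deterministic refinement of `X` (via `f : U → X`),
the Arimoto MI of the induced joint pmf `P_U(u) W(y|f(u))` equals the Sibson MI
of the tilted input distribution `Q(x) ∝ ∑_{u : f u = x} P_U(u)^α` with `W`. -/
theorem arimoto_eq_sibson_of_deterministic {U X Y : Type}
    [Fintype U] [Fintype X] [Fintype Y] [Nonempty U] [Nonempty X] [Nonempty Y]
    [DecidableEq X]
    (α : ℝ) (hα : 1 < α)
    (W : X → Y → ℝ) (hW : ∀ x, IsPMF (W x))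
    (f : U → X) (PU : U → ℝ) (hPU : IsPMF PU) :
    arimotoMI α (fun u y => PU u * W (f u) y) =
      sibsonMI α
        (fun x => (∑ u ∈ Finset.univ.filter (fun u => f u = x), PU u ^ α) /
          ∑ u, PU u ^ α) W := by
  obtain ⟨hPU0, hPU1⟩ := hPU
  set S : ℝ := ∑ u, PU u ^ α with hS
  have hS0 : 0 < S := by
    have : ∃ u, 0 < PU u := by
      by_contra h
      push_neg at h
      have : ∑ u, PU u = 0 := Finset.sum_eq_zero fun u _ => le_antisymm (h u) (hPU0 u)
      rw [hPU1] at this; norm_num at this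
    obtain ⟨u, hu⟩ := this
    exact Finset.sum_pos' (fun i _ => Real.rpow_nonneg (hPU0 i) α)
      ⟨u, Finset.mem_univ u, Real.rpow_pos_of_pos hu α⟩
  -- marginal: ∑ y, PU u * W (f u) y = PU u
  have hmarg : ∀ u : U, ∑ y, PU u * W (f u) y = PU u := by
    intro u
    rw [← Finset.mul_sum, (hW (f u)).2, mul_one]
  -- key: ∑_u (PU u * W (f u) y)^α = S * ∑_x Q x * W x y ^ α
  have hkey : ∀ y : Y, ∑ u, (PU u * W (f u) y) ^ α =
      S * ∑ x, ((∑ u ∈ Finset.univ.filter (fun u => f u = x), PU u ^ α) / S) * W x y ^ α := by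
    intro y
    rw [Finset.mul_sum]
    have h1 : ∑ u, (PU u * W (f u) y) ^ α = ∑ u, PU u ^ α * W (f u) y ^ α := by
      refine Finset.sum_congr rfl fun u _ => ?_
      exact Real.mul_rpow (hPU0 u) ((hW (f u)).1 y)
    rw [h1, ← Finset.sum_fiberwise Finset.univ f (fun u => PU u ^ α * W (f u) y ^ α)]
    refine Finset.sum_congr rfl fun x _ => ?_
    have : ∑ u ∈ Finset.univ.filter (fun u => f u = x), PU u ^ α * W (f u) y ^ α
        = (∑ u ∈ Finset.univ.filter (fun u => f u = x), PU u ^ α) * W x y ^ α := by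
      rw [Finset.sum_mul]
      refine Finset.sum_congr rfl fun u hu => ?_
      rw [(Finset.mem_filter.1 hu).2]
    rw [this]
    field_simp
  unfold arimotoMI sibsonMI
  congr 1
  have hQnn : ∀ y : Y, 0 ≤ ∑ x, ((∑ u ∈ Finset.univ.filter (fun u => f u = x), PU u ^ α) / S) * W x y ^ α := by
    intro y
    refine Finset.sum_nonneg fun x _ => mul_nonneg (div_nonneg ?_ hS0.le)
      (Real.rpow_nonneg ((hW x).1 y) α)
    exact Finset.sum_nonneg fun u _ => Real.rpow_nonneg (hPU0 u) α
  have hnum : ∑ y, (∑ u, (PU u * W (f u) y) ^ α) ^ (1/α)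
      = S ^ (1/α) * ∑ y, (∑ x, ((∑ u ∈ Finset.univ.filter (fun u => f u = x), PU u ^ α) / S) * W x y ^ α) ^ (1/α) := by
    rw [Finset.mul_sum]
    refine Finset.sum_congr rfl fun y _ => ?_
    rw [hkey y, Real.mul_rpow hS0.le (hQnn y)]
  have hden : (∑ u, (∑ y, PU u * W (f u) y) ^ α) = S := by
    refine Finset.sum_congr rfl fun u _ => ?_
    rw [hmarg u]
  simp only [hnum, hden]
  rw [mul_comm, mul_div_cancel_right₀ _ (ne_of_gt (Real.rpow_pos_of_pos hS0 (1/α)))]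
end

section
/- Let 𝒳, 𝒴 be nonempty finite sets, α ∈ (1,∞), W a channel from 𝒳 to 𝒴, and P_X a probability mass function on 𝒳 with full support. Then the supremum, over all nonempty finite sets 𝒰, probability mass functions P_U on 𝒰, and channels V from 𝒰 to 𝒳 whose induced X-marginal ∑_u P_U(u)V(x|u) equals P_X(x), of the Arimoto mutual information I_α^A of the joint pmf P_{UY}(u,y) = P_U(u)·∑_x V(x|u)W(y|x), equals the supremum over all probability mass functions Q on 𝒳 of the Sibson mutual information I_α^S(Q,W). -/
open Real BigOperators

lemma pmf_exists_pos {X : Type} [Fintype X] {P : X → ℝ} (hP : IsPMF P) : ∃ x, 0 < P x := by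
  by_contra h
  push_neg at h
  have h2 : ∑ x, P x ≤ 0 := Finset.sum_nonpos fun x _ => h x
  rw [hP.2] at h2; linarith

lemma pmf_le_one {X : Type} [Fintype X] {P : X → ℝ} (hP : IsPMF P) (x : X) : P x ≤ 1 := by
  rw [← hP.2]
  exact Finset.single_le_sum (fun x _ => hP.1 x) (Finset.mem_univ x)

lemma sibson_sum_pos {X Y : Type} [Fintype X] [Fintype Y] {α : ℝ} (hα : 1 < α)
    {W : X → Y → ℝ} (hW : ∀ x, IsPMF (W x)) {Q : X → ℝ} (hQ : IsPMF Q) :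
    0 < ∑ y, (∑ x, Q x * W x y ^ α) ^ (1 / α) := by
  obtain ⟨x0, hx0⟩ := pmf_exists_pos hQ
  obtain ⟨y0, hy0⟩ := pmf_exists_pos (hW x0)
  have hinner : ∀ y, 0 ≤ ∑ x, Q x * W x y ^ α := fun y =>
    Finset.sum_nonneg fun x _ => mul_nonneg (hQ.1 x) (Real.rpow_nonneg ((hW x).1 y) α)
  have hpos : 0 < ∑ x, Q x * W x y0 ^ α :=
    Finset.sum_pos' (fun x _ => mul_nonneg (hQ.1 x) (Real.rpow_nonneg ((hW x).1 y0) α))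
      ⟨x0, Finset.mem_univ _, mul_pos hx0 (Real.rpow_pos_of_pos hy0 α)⟩
  exact Finset.sum_pos' (fun y _ => Real.rpow_nonneg (hinner y) _)
    ⟨y0, Finset.mem_univ _, Real.rpow_pos_of_pos hpos _⟩

lemma sibson_le_bound {X Y : Type} [Fintype X] [Fintype Y] {α : ℝ} (hα : 1 < α)
    {W : X → Y → ℝ} (hW : ∀ x, IsPMF (W x)) {Q : X → ℝ} (hQ : IsPMF Q) :
    sibsonMI α Q W ≤ α / (α - 1) * Real.log (Fintype.card Y) := by
  have hc : 0 ≤ α / (α - 1) := div_nonneg (by linarith) (by linarith)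
  refine mul_le_mul_of_nonneg_left ?_ hc
  refine Real.log_le_log (sibson_sum_pos hα hW hQ) ?_
  have h1 : ∀ y : Y, (∑ x, Q x * W x y ^ α) ^ (1 / α) ≤ 1 := by
    intro y
    refine Real.rpow_le_one
      (Finset.sum_nonneg fun x _ => mul_nonneg (hQ.1 x) (Real.rpow_nonneg ((hW x).1 y) α))
      ?_ (by positivity)
    calc ∑ x, Q x * W x y ^ α ≤ ∑ x, Q x := by
          refine Finset.sum_le_sum fun x _ => ?_
          have := Real.rpow_le_one ((hW x).1 y) (pmf_le_one (hW x) y) (by linarith : (0:ℝ) ≤ α)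
          nlinarith [hQ.1 x]
      _ = 1 := hQ.2
  calc ∑ y, (∑ x, Q x * W x y ^ α) ^ (1 / α) ≤ ∑ _y : Y, (1:ℝ) :=
        Finset.sum_le_sum fun y _ => h1 y
    _ = Fintype.card Y := by simp

lemma arimoto_le {X Y : Type} [Fintype X] [Fintype Y] {α : ℝ} (hα : 1 < α)
    {W : X → Y → ℝ} (hW : ∀ x, IsPMF (W x)) {U : Type} [Fintype U]
    {PU : U → ℝ} (hPU : IsPMF PU) {V : U → X → ℝ} (hV : ∀ u, IsPMF (V u)) :
    ∃ Q : X → ℝ, IsPMF Q ∧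
      arimotoMI α (fun u y => PU u * ∑ x, V u x * W x y) ≤ sibsonMI α Q W := by
  have hα0 : (0:ℝ) < α := by linarith
  set C : ℝ := ∑ u, PU u ^ α with hC
  set c : X → ℝ := fun x => ∑ u, PU u ^ α * V u x with hc
  have hCpos : 0 < C := by
    obtain ⟨u0, hu0⟩ := pmf_exists_pos hPU
    exact Finset.sum_pos' (fun u _ => Real.rpow_nonneg (hPU.1 u) α)
      ⟨u0, Finset.mem_univ _, Real.rpow_pos_of_pos hu0 α⟩
  have hcnn : ∀ x, 0 ≤ c x := fun x =>
    Finset.sum_nonneg fun u _ => mul_nonneg (Real.rpow_nonneg (hPU.1 u) α) ((hV u).1 x)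
  have hcsum : ∑ x, c x = C := by
    rw [hc, Finset.sum_comm]
    exact Finset.sum_congr rfl fun u _ => by
      rw [← Finset.mul_sum, (hV u).2, mul_one]
  refine ⟨fun x => c x / C, ⟨fun x => div_nonneg (hcnn x) hCpos.le, by
      rw [← Finset.sum_div, hcsum, div_self hCpos.ne']⟩, ?_⟩
  -- joint pmf
  set P : U → Y → ℝ := fun u y => PU u * ∑ x, V u x * W x y with hP
  have hPnn : ∀ u y, 0 ≤ P u y := fun u y =>
    mul_nonneg (hPU.1 u) (Finset.sum_nonneg fun x _ => mul_nonneg ((hV u).1 x) ((hW x).1 y))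
  -- row sums
  have hrow : ∀ u, ∑ y, P u y = PU u := by
    intro u
    rw [hP]
    simp only
    rw [← Finset.mul_sum, Finset.sum_comm]
    have : ∀ x ∈ Finset.univ, ∑ y, V u x * W x y = V u x := fun x _ => by
      rw [← Finset.mul_sum, (hW x).2, mul_one]
    rw [Finset.sum_congr rfl this, (hV u).2, mul_one]
  -- key pointwise bound
  have hkey : ∀ y, ∑ u, P u y ^ α ≤ C * ∑ x, (c x / C) * W x y ^ α := by
    intro y
    have hRHS : C * ∑ x, (c x / C) * W x y ^ α = ∑ x, c x * W x y ^ α := by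
      rw [Finset.mul_sum]
      exact Finset.sum_congr rfl fun x _ => by
        field_simp
    rw [hRHS]
    have step1 : ∀ u, P u y ^ α ≤ PU u ^ α * ∑ x, V u x * W x y ^ α := by
      intro u
      have hmul : P u y ^ α = PU u ^ α * (∑ x, V u x * W x y) ^ α :=
        Real.mul_rpow (hPU.1 u)
          (Finset.sum_nonneg fun x _ => mul_nonneg ((hV u).1 x) ((hW x).1 y))
      rw [hmul]
      refine mul_le_mul_of_nonneg_left ?_ (Real.rpow_nonneg (hPU.1 u) α)
      exact Real.rpow_arith_mean_le_arith_mean_rpow Finset.univ (V u) (fun x => W x y)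
        (fun x _ => (hV u).1 x) (hV u).2 (fun x _ => (hW x).1 y) hα.le
    calc ∑ u, P u y ^ α ≤ ∑ u, PU u ^ α * ∑ x, V u x * W x y ^ α :=
          Finset.sum_le_sum fun u _ => step1 u
      _ = ∑ x, c x * W x y ^ α := by
          simp_rw [Finset.mul_sum]
          rw [Finset.sum_comm]
          refine Finset.sum_congr rfl fun x _ => ?_
          rw [hc]
          simp only
          rw [Finset.sum_mul]
          exact Finset.sum_congr rfl fun u _ => by ring
  -- numerator positivity
  have hnumpos : 0 < ∑ y, (∑ u, P u y ^ α) ^ (1 / α) := by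
    obtain ⟨u0, hu0⟩ := pmf_exists_pos hPU
    have : 0 < ∑ y, P u0 y := by rw [hrow]; exact hu0
    have hy0 : ∃ y, 0 < P u0 y := by
      by_contra h
      push_neg at h
      have h2 : ∑ y, P u0 y ≤ 0 := Finset.sum_nonpos fun y _ => h y
      linarith
    obtain ⟨y0, hy0⟩ := hy0
    refine Finset.sum_pos' (fun y _ => Real.rpow_nonneg
      (Finset.sum_nonneg fun u _ => Real.rpow_nonneg (hPnn u y) α) _) ⟨y0, Finset.mem_univ _, ?_⟩
    refine Real.rpow_pos_of_pos ?_ _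
    exact Finset.sum_pos' (fun u _ => Real.rpow_nonneg (hPnn u y0) α)
      ⟨u0, Finset.mem_univ _, Real.rpow_pos_of_pos hy0 α⟩
  -- assemble
  have hconst : 0 ≤ α / (α - 1) := div_nonneg (by linarith) (by linarith)
  rw [arimotoMI, sibsonMI]
  refine mul_le_mul_of_nonneg_left ?_ hconst
  have hden : (∑ u, (∑ y, P u y) ^ α) ^ (1 / α) = C ^ (1 / α) := by
    congr 1
    exact Finset.sum_congr rfl fun u _ => by rw [hrow]
  have hCpow : (0:ℝ) < C ^ (1 / α) := Real.rpow_pos_of_pos hCpos _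
  refine Real.log_le_log ?_ ?_
  · exact div_pos hnumpos (by rw [hden]; exact hCpow)
  · rw [hden, div_le_iff₀ hCpow]
    calc ∑ y, (∑ u, P u y ^ α) ^ (1 / α)
        ≤ ∑ y, (C * ∑ x, (c x / C) * W x y ^ α) ^ (1 / α) := by
          refine Finset.sum_le_sum fun y _ => ?_
          exact Real.rpow_le_rpow
            (Finset.sum_nonneg fun u _ => Real.rpow_nonneg (hPnn u y) α)
            (hkey y) (by positivity)
      _ = (∑ y, (∑ x, (c x / C) * W x y ^ α) ^ (1 / α)) * C ^ (1 / α) := by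
          rw [Finset.sum_mul]
          refine Finset.sum_congr rfl fun y _ => ?_
          rw [Real.mul_rpow hCpos.le
            (Finset.sum_nonneg fun x _ => mul_nonneg (div_nonneg (hcnn x) hCpos.le)
              (Real.rpow_nonneg ((hW x).1 y) α))]
          ring

lemma sibson_achieved {X Y : Type} [Fintype X] [Fintype Y] [Nonempty X] [Nonempty Y]
    {α : ℝ} (hα : 1 < α) {W : X → Y → ℝ} (hW : ∀ x, IsPMF (W x))
    {PX : X → ℝ} (hPX : IsPMF PX) (hfull : ∀ x, 0 < PX x)
    {Q : X → ℝ} (hQ : IsPMF Q) (hQfull : ∀ x, 0 < Q x) :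
    ∃ (U : Type) (iU : Fintype U) (_ : Nonempty U)
      (PU : U → ℝ) (V : U → X → ℝ),
      @IsPMF U iU PU ∧ (∀ u, IsPMF (V u)) ∧
      (∀ x, @Finset.sum U ℝ _ (@Finset.univ U iU) (fun u => PU u * V u x) = PX x) ∧
      sibsonMI α Q W = @arimotoMI α U Y iU _
        (fun u y => PU u * ∑ x, V u x * W x y) := by
  classical
  have hα0 : (0:ℝ) < α := by linarith
  have hα1 : α - 1 > 0 := by linarith
  -- the tilt factor t and targets s x ∈ (0,1]
  set t : ℝ := Finset.univ.inf' Finset.univ_nonempty (fun x => PX x ^ α / Q x) with htdef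
  have ht : 0 < t := (Finset.lt_inf'_iff _).mpr fun x _ =>
    div_pos (Real.rpow_pos_of_pos (hfull x) α) (hQfull x)
  set s : X → ℝ := fun x => t * Q x / PX x ^ α with hsdef
  have hPXa : ∀ x, (0:ℝ) < PX x ^ α := fun x => Real.rpow_pos_of_pos (hfull x) α
  have hs_pos : ∀ x, 0 < s x := fun x =>
    div_pos (mul_pos ht (hQfull x)) (hPXa x)
  have hs_le1 : ∀ x, s x ≤ 1 := by
    intro x
    have h1 : t ≤ PX x ^ α / Q x := Finset.inf'_le _ (Finset.mem_univ x)
    have h2 : t * Q x ≤ PX x ^ α := by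
      rw [← le_div_iff₀ (hQfull x)]; exact h1
    rw [hsdef]
    exact div_le_one_of_le₀ h2 (hPXa x).le
  set smin : ℝ := Finset.univ.inf' Finset.univ_nonempty s with hsmindef
  have hsmin_pos : 0 < smin := (Finset.lt_inf'_iff _).mpr fun x _ => hs_pos x
  have hsmin_le : ∀ x, smin ≤ s x := fun x => Finset.inf'_le _ (Finset.mem_univ x)
  -- choose n with (n : ℝ) ^ (1 - α) ≤ smin
  set r : ℝ := smin ^ (1 / (1 - α)) with hrdef
  have hr : 0 < r := Real.rpow_pos_of_pos hsmin_pos _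
  set n : ℕ := ⌈r⌉₊ + 1 with hndef
  have hnR : (0:ℝ) < n := by positivity
  have hrn : r ≤ (n:ℝ) := by
    calc r ≤ (⌈r⌉₊ : ℝ) := Nat.le_ceil r
      _ ≤ (n:ℝ) := by rw [hndef]; push_cast; linarith
  have hne : (1:ℝ) - α ≠ 0 := by linarith
  have hcn_le : ((n:ℝ)) ^ (1 - α) ≤ smin := by
    have h1 : ((n:ℝ)) ^ (1 - α) ≤ r ^ (1 - α) :=
      Real.rpow_le_rpow_of_nonpos hr hrn (by linarith)
    have h2 : r ^ (1 - α) = smin := by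
      rw [hrdef, ← Real.rpow_mul hsmin_pos.le]
      rw [one_div, inv_mul_cancel₀ hne, Real.rpow_one]
    linarith
  set cn : ℝ := ((n:ℝ)) ^ (1 - α) with hcndef
  have hcn_pos : 0 < cn := Real.rpow_pos_of_pos hnR _
  -- IVT: for each x get a x ∈ [0,1] with a^α + cn*(1-a)^α = s x
  have contpow : Continuous fun a : ℝ => a ^ α :=
    continuous_iff_continuousAt.mpr fun x =>
      Real.continuousAt_rpow_const x α (Or.inr hα0.le)
  have hcont : Continuous fun a : ℝ => a ^ α + cn * (1 - a) ^ α :=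
    contpow.add (continuous_const.mul (contpow.comp (continuous_const.sub continuous_id)))
  have hIVT : ∀ x : X, ∃ a : ℝ, a ∈ Set.Icc (0:ℝ) 1 ∧ a ^ α + cn * (1 - a) ^ α = s x := by
    intro x
    have h0 : (fun a : ℝ => a ^ α + cn * (1 - a) ^ α) 0 = cn := by
      simp [Real.zero_rpow hα0.ne', Real.one_rpow]
    have h1 : (fun a : ℝ => a ^ α + cn * (1 - a) ^ α) 1 = 1 := by
      simp [Real.zero_rpow hα0.ne', Real.one_rpow]
    have hmem : s x ∈ Set.Icc ((fun a : ℝ => a ^ α + cn * (1 - a) ^ α) 0)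
        ((fun a : ℝ => a ^ α + cn * (1 - a) ^ α) 1) := by
      rw [h0, h1]
      exact ⟨le_trans hcn_le (hsmin_le x), hs_le1 x⟩
    obtain ⟨a, ha, haeq⟩ := intermediate_value_Icc zero_le_one hcont.continuousOn hmem
    exact ⟨a, ha, haeq⟩
  choose a ha hseq using hIVT
  -- the splitting weights
  set lam : X → Fin (n + 1) → ℝ :=
    fun x i => if i = 0 then a x else (1 - a x) / n with hlamdef
  have hlam_nn : ∀ x i, 0 ≤ lam x i := by
    intro x i
    rw [hlamdef]
    dsimp only
    split
    · exact (ha x).1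
    · exact div_nonneg (by linarith [(ha x).2]) hnR.le
  have hlam0 : ∀ x, lam x 0 = a x := by
    intro x; simp [hlamdef]
  have hlamS : ∀ x (i : Fin n), lam x i.succ = (1 - a x) / n := by
    intro x i; simp [hlamdef, Fin.succ_ne_zero]
  have hlam_sum : ∀ x, ∑ i, lam x i = 1 := by
    intro x
    rw [Fin.sum_univ_succ, hlam0, Finset.sum_congr rfl fun i _ => hlamS x i,
      Finset.sum_const, Finset.card_univ, Fintype.card_fin, nsmul_eq_mul,
      mul_comm, div_mul_cancel₀ _ hnR.ne']
    ring
  have hlam_pow : ∀ x, ∑ i, lam x i ^ α = s x := by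
    intro x
    have hdiv : ∀ i : Fin n, lam x i.succ ^ α = (1 - a x) ^ α / (n:ℝ) ^ α := by
      intro i
      rw [hlamS x i]
      exact Real.div_rpow (by linarith [(ha x).2]) hnR.le α
    have hnpow : (n:ℝ) * ((1 - a x) ^ α / (n:ℝ) ^ α) = cn * (1 - a x) ^ α := by
      rw [hcndef, Real.rpow_sub hnR, Real.rpow_one]
      ring
    rw [Fin.sum_univ_succ, hlam0, Finset.sum_congr rfl fun i _ => hdiv i,
      Finset.sum_const, Finset.card_univ, Fintype.card_fin, nsmul_eq_mul, hnpow, hseq x]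
  -- the construction
  refine ⟨X × Fin (n + 1), inferInstance, inferInstance,
    fun u => PX u.1 * lam u.1 u.2,
    fun u x' => if x' = u.1 then 1 else 0, ?_, ?_, ?_, ?_⟩
  · constructor
    · exact fun u => mul_nonneg (hPX.1 u.1) (hlam_nn u.1 u.2)
    · rw [Fintype.sum_prod_type]
      calc ∑ x, ∑ i, PX x * lam x i = ∑ x, PX x := by
            refine Finset.sum_congr rfl fun x _ => ?_
            rw [← Finset.mul_sum, hlam_sum, mul_one]
        _ = 1 := hPX.2
  · intro u
    constructor
    · intro x'; dsimp only; split <;> norm_num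
    · simp
  · intro x'
    rw [Fintype.sum_prod_type]
    have hterm : ∀ x : X, (∑ i, PX x * lam x i * (if x' = x then 1 else 0)) =
        if x' = x then PX x else 0 := by
      intro x
      by_cases hxx : x' = x
      · subst hxx
        simp only [eq_self_iff_true, if_true, mul_one]
        rw [← Finset.mul_sum, hlam_sum, mul_one]
      · simp [hxx]
    rw [Finset.sum_congr rfl fun x _ => hterm x]
    simp
  · -- the information equality
    have hjoint : ∀ (u : X × Fin (n+1)) (y : Y),
        (PX u.1 * lam u.1 u.2) * ∑ x, (if x = u.1 then 1 else 0) * W x y =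
        PX u.1 * lam u.1 u.2 * W u.1 y := by
      intro u y
      congr 1
      simp only [ite_mul, one_mul, zero_mul]
      rw [Finset.sum_ite_eq' Finset.univ u.1 (fun x => W x y)]
      simp
    simp only [arimotoMI, sibsonMI]
    congr 1
    have hrow : ∀ u : X × Fin (n+1),
        ∑ y, (PX u.1 * lam u.1 u.2) * ∑ x, (if x = u.1 then 1 else 0) * W x y =
        PX u.1 * lam u.1 u.2 := by
      intro u
      rw [Finset.sum_congr rfl fun y _ => hjoint u y, ← Finset.mul_sum, (hW u.1).2, mul_one]
    have hPXs : ∀ x, PX x ^ α * s x = t * Q x := by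
      intro x
      have hsx : s x = t * Q x / PX x ^ α := rfl
      rw [hsx, mul_comm]
      exact div_mul_cancel₀ _ (hPXa x).ne'
    have hinner : ∀ y : Y, ∑ u : X × Fin (n+1),
        ((PX u.1 * lam u.1 u.2) * ∑ x, (if x = u.1 then 1 else 0) * W x y) ^ α =
        t * ∑ x, Q x * W x y ^ α := by
      intro y
      rw [Finset.sum_congr rfl fun u _ => by rw [hjoint u y]]
      rw [Fintype.sum_prod_type]
      have hx : ∀ x : X, ∑ i, (PX x * lam x i * W x y) ^ α =
          t * (Q x * W x y ^ α) := by
        intro x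
        have hexp : ∀ i, (PX x * lam x i * W x y) ^ α =
            PX x ^ α * lam x i ^ α * W x y ^ α := by
          intro i
          rw [Real.mul_rpow (mul_nonneg (hPX.1 x) (hlam_nn x i)) ((hW x).1 y),
            Real.mul_rpow (hPX.1 x) (hlam_nn x i)]
        rw [Finset.sum_congr rfl fun i _ => hexp i]
        have : ∑ i, PX x ^ α * lam x i ^ α * W x y ^ α =
            PX x ^ α * (∑ i, lam x i ^ α) * W x y ^ α := by
          rw [← Finset.sum_mul, ← Finset.mul_sum]
        rw [this, hlam_pow, hPXs]
        ring
      rw [Finset.sum_congr rfl fun x _ => hx x, ← Finset.mul_sum]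
    have hden : ∑ u : X × Fin (n+1), (PX u.1 * lam u.1 u.2) ^ α = t := by
      rw [Fintype.sum_prod_type]
      have hx : ∀ x : X, ∑ i, (PX x * lam x i) ^ α = t * Q x := by
        intro x
        have hexp : ∀ i, (PX x * lam x i) ^ α = PX x ^ α * lam x i ^ α := fun i =>
          Real.mul_rpow (hPX.1 x) (hlam_nn x i)
        rw [Finset.sum_congr rfl fun i _ => hexp i, ← Finset.mul_sum, hlam_pow, hPXs]
      rw [Finset.sum_congr rfl fun x _ => hx x, ← Finset.mul_sum, hQ.2, mul_one]
    -- assemble the log argument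
    have htpow : (0:ℝ) < t ^ (1/α) := Real.rpow_pos_of_pos ht _
    have hnum : ∑ y : Y, (∑ u : X × Fin (n+1),
        ((PX u.1 * lam u.1 u.2) * ∑ x, (if x = u.1 then 1 else 0) * W x y) ^ α) ^ (1/α) =
        t ^ (1/α) * ∑ y, (∑ x, Q x * W x y ^ α) ^ (1/α) := by
      rw [Finset.mul_sum]
      refine Finset.sum_congr rfl fun y _ => ?_
      rw [hinner y, Real.mul_rpow ht.le (Finset.sum_nonneg fun x _ =>
        mul_nonneg (hQ.1 x) (Real.rpow_nonneg ((hW x).1 y) α))]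
    have hdenfull : (∑ u : X × Fin (n+1), (∑ y,
        (PX u.1 * lam u.1 u.2) * ∑ x, (if x = u.1 then 1 else 0) * W x y) ^ α) ^ (1/α) =
        t ^ (1/α) := by
      rw [Finset.sum_congr rfl fun u _ => by rw [hrow u], hden]
    rw [hnum, hdenfull, mul_comm, mul_div_assoc, div_self htpow.ne', mul_one]

/-- the supremum over all finite `U`, pmfs `P_U` and channels `V`
from `U` to `X` inducing the (full-support) marginal `P_X`, of the Arimoto MI
of the induced joint pmf on `U × Y`, equals the supremum over input pmfs `Q`
on `X` of the Sibson MI of `(Q, W)`. -/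
theorem max_alpha_leakage_eq_sup_sibson {X Y : Type}
    [Fintype X] [Fintype Y] [Nonempty X] [Nonempty Y]
    (α : ℝ) (hα : 1 < α)
    (W : X → Y → ℝ) (hW : ∀ x, IsPMF (W x))
    (PX : X → ℝ) (hPX : IsPMF PX) (hfull : ∀ x, 0 < PX x) :
    sSup {v : ℝ | ∃ (U : Type) (iU : Fintype U) (_ : Nonempty U)
        (PU : U → ℝ) (V : U → X → ℝ),
        @IsPMF U iU PU ∧ (∀ u, IsPMF (V u)) ∧
        (∀ x, @Finset.sum U ℝ _ (@Finset.univ U iU) (fun u => PU u * V u x) = PX x) ∧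
        v = @arimotoMI α U Y iU _
          (fun u y => PU u * ∑ x, V u x * W x y)} =
    sSup {v : ℝ | ∃ Q : X → ℝ, IsPMF Q ∧ v = sibsonMI α Q W} := by
  classical
  set A : Set ℝ := {v : ℝ | ∃ (U : Type) (iU : Fintype U) (_ : Nonempty U)
        (PU : U → ℝ) (V : U → X → ℝ),
        @IsPMF U iU PU ∧ (∀ u, IsPMF (V u)) ∧
        (∀ x, @Finset.sum U ℝ _ (@Finset.univ U iU) (fun u => PU u * V u x) = PX x) ∧
        v = @arimotoMI α U Y iU _
          (fun u y => PU u * ∑ x, V u x * W x y)} with hA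
  set B : Set ℝ := {v : ℝ | ∃ Q : X → ℝ, IsPMF Q ∧ v = sibsonMI α Q W} with hB
  have hAle : ∀ v ∈ A, ∃ Q : X → ℝ, IsPMF Q ∧ v ≤ sibsonMI α Q W := by
    rintro v ⟨U, iU, hne, PU, V, hPU, hV, hmarg, rfl⟩
    exact arimoto_le hα hW hPU hV
  have hBbdd : BddAbove B := by
    refine ⟨α / (α - 1) * Real.log (Fintype.card Y), ?_⟩
    rintro v ⟨Q, hQ, rfl⟩
    exact sibson_le_bound hα hW hQ
  have hAbdd : BddAbove A := by
    refine ⟨α / (α - 1) * Real.log (Fintype.card Y), ?_⟩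
    intro v hv
    obtain ⟨Q, hQ, hle⟩ := hAle v hv
    exact hle.trans (sibson_le_bound hα hW hQ)
  have hBne : B.Nonempty := ⟨sibsonMI α PX W, PX, hPX, rfl⟩
  have hAne : A.Nonempty := by
    obtain ⟨U, iU, hne, PU, V, h1, h2, h3, h4⟩ :=
      sibson_achieved hα hW hPX hfull hPX hfull
    exact ⟨sibsonMI α PX W, U, iU, hne, PU, V, h1, h2, h3, h4⟩
  apply le_antisymm
  · refine csSup_le hAne fun v hv => ?_
    obtain ⟨Q, hQ, hle⟩ := hAle v hv
    exact hle.trans (le_csSup hBbdd ⟨Q, hQ, rfl⟩)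
  · refine csSup_le hBne ?_
    rintro v ⟨Q, hQ, rfl⟩
    -- perturb Q to have full support, then take a limit
    have hcX : (0:ℝ) < (Fintype.card X : ℝ) := by
      have := Fintype.card_pos (α := X)
      exact_mod_cast this
    set Qe : ℝ → X → ℝ := fun ε x => (1 - ε) * Q x + ε * (Fintype.card X : ℝ)⁻¹ with hQe
    have hQ0 : Qe 0 = Q := by funext x; simp [hQe]
    have hle' : ∀ ε ∈ Set.Ioc (0:ℝ) 1, sibsonMI α (Qe ε) W ≤ sSup A := by
      intro ε hε
      have hpmf : IsPMF (Qe ε) := by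
        constructor
        · intro x
          have h1 : 0 ≤ (1 - ε) * Q x := mul_nonneg (by linarith [hε.2]) (hQ.1 x)
          have h2 : 0 ≤ ε * (Fintype.card X : ℝ)⁻¹ :=
            mul_nonneg hε.1.le (inv_nonneg.mpr hcX.le)
          simp only [hQe]
          linarith
        · simp only [hQe]
          rw [Finset.sum_add_distrib, ← Finset.mul_sum, hQ.2, ← Finset.mul_sum,
            Finset.sum_const, Finset.card_univ, nsmul_eq_mul,
            mul_inv_cancel₀ hcX.ne']
          ring
      have hfullQ : ∀ x, 0 < Qe ε x := by
        intro x
        have h1 : 0 ≤ (1 - ε) * Q x := mul_nonneg (by linarith [hε.2]) (hQ.1 x)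
        have h2 : 0 < ε * (Fintype.card X : ℝ)⁻¹ := mul_pos hε.1 (inv_pos.mpr hcX)
        simp only [hQe]
        linarith
      obtain ⟨U, iU, hne, PU, V, h1, h2, h3, h4⟩ :=
        sibson_achieved hα hW hPX hfull hpmf hfullQ
      exact le_csSup hAbdd ⟨U, iU, hne, PU, V, h1, h2, h3, h4⟩
    have key : ContinuousAt (fun ε => sibsonMI α (Qe ε) W) 0 := by
      have contQ : ∀ y : Y, Continuous fun ε : ℝ => ∑ x, Qe ε x * W x y ^ α := by
        intro y
        refine continuous_finset_sum _ fun x _ => ?_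
        have hc : Continuous fun ε : ℝ => Qe ε x := by
          simp only [hQe]
          exact ((continuous_const.sub continuous_id).mul continuous_const).add
            (continuous_id.mul continuous_const)
        exact hc.mul continuous_const
      have contpow2 : Continuous fun t : ℝ => t ^ (1/α) :=
        continuous_iff_continuousAt.mpr fun t =>
          Real.continuousAt_rpow_const t _ (Or.inr (by positivity))
      have contg : Continuous fun ε : ℝ => ∑ y, (∑ x, Qe ε x * W x y ^ α) ^ (1/α) :=
        continuous_finset_sum _ fun y _ => contpow2.comp (contQ y)
      have hgpos : (0:ℝ) < ∑ y, (∑ x, Qe 0 x * W x y ^ α) ^ (1/α) := by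
        rw [hQ0]
        exact sibson_sum_pos hα hW hQ
      have hcomp : ContinuousAt (fun ε : ℝ =>
          Real.log (∑ y, (∑ x, Qe ε x * W x y ^ α) ^ (1/α))) 0 :=
        contg.continuousAt.log (ne_of_gt hgpos)
      have hfin : ContinuousAt (fun ε : ℝ =>
          (α / (α - 1)) * Real.log (∑ y, (∑ x, Qe ε x * W x y ^ α) ^ (1/α))) 0 :=
        continuousAt_const.mul hcomp
      simpa [sibsonMI] using hfin
    have h0eq : (fun ε : ℝ => sibsonMI α (Qe ε) W) 0 = sibsonMI α Q W := by
      simp only [hQ0]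
    have htend : Filter.Tendsto (fun ε : ℝ => sibsonMI α (Qe ε) W)
        (nhdsWithin 0 (Set.Ioi 0)) (nhds (sibsonMI α Q W)) := by
      have h := key.tendsto
      rw [hQ0] at h
      exact h.mono_left nhdsWithin_le_nhds
    exact le_of_tendsto htend
      (Filter.eventually_of_mem (Ioc_mem_nhdsGT one_pos) hle')
end

section
/- Let 𝒳, 𝒴 be nonempty finite sets and α ∈ (1,∞). Define, for a channel W from 𝒳 to 𝒴, the maximal α-leakage L_α^max(W) = sup over probability mass functions Q on 𝒳 of I_α^S(Q,W). Then L_α^max is quasi-convex on the convex set of channels from 𝒳 to 𝒴: for any channels W₀, W₁ and any λ ∈ [0,1], L_α^max(λW₀ + (1−λ)W₁) ≤ max( L_α^max(W₀), L_α^max(W₁) ). -/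
open Real BigOperators

/-- Maximal α-leakage of a channel `W`. -/
noncomputable def maxAlphaLeakage (α : ℝ) {X Y : Type} [Fintype X] [Fintype Y]
    (W : X → Y → ℝ) : ℝ :=
  sSup {v : ℝ | ∃ Q : X → ℝ, IsPMF Q ∧ v = sibsonMI α Q W}

section Aux

variable {X Y : Type} [Fintype X] [Fintype Y]

/-- The inner quantity of the Sibson MI. -/
noncomputable def sibSum (α : ℝ) (Q : X → ℝ) (W : X → Y → ℝ) : ℝ :=
  ∑ y, (∑ x, Q x * W x y ^ α) ^ (1 / α)

lemma sibSum_pos {α : ℝ} (hα : 1 < α) {Q : X → ℝ} (hQ : IsPMF Q)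
    {W : X → Y → ℝ} (hW : ∀ x, IsPMF (W x)) : 0 < sibSum α Q W := by
  obtain ⟨hQ0, hQ1⟩ := hQ
  -- there is x₀ with Q x₀ > 0
  have hx : ∃ x₀, 0 < Q x₀ := by
    by_contra h
    push_neg at h
    have : ∑ x, Q x = 0 := Finset.sum_eq_zero fun x _ => le_antisymm (h x) (hQ0 x)
    simp [this] at hQ1
  obtain ⟨x₀, hx₀⟩ := hx
  have hy : ∃ y₀, 0 < W x₀ y₀ := by
    by_contra h
    push_neg at h
    have : ∑ y, W x₀ y = 0 :=
      Finset.sum_eq_zero fun y _ => le_antisymm (h y) ((hW x₀).1 y)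
    have := (hW x₀).2
    simp_all
  obtain ⟨y₀, hy₀⟩ := hy
  have hinner_nonneg : ∀ y, 0 ≤ ∑ x, Q x * W x y ^ α := fun y =>
    Finset.sum_nonneg fun x _ => mul_nonneg (hQ0 x) (Real.rpow_nonneg ((hW x).1 y) α)
  have hinner_pos : 0 < ∑ x, Q x * W x y₀ ^ α := by
    refine Finset.sum_pos' (fun x _ => mul_nonneg (hQ0 x) (Real.rpow_nonneg ((hW x).1 y₀) α))
      ⟨x₀, Finset.mem_univ _, ?_⟩
    exact mul_pos hx₀ (Real.rpow_pos_of_pos hy₀ α)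
  refine Finset.sum_pos' (fun y _ => Real.rpow_nonneg (hinner_nonneg y) _)
    ⟨y₀, Finset.mem_univ _, Real.rpow_pos_of_pos hinner_pos _⟩

lemma sibSum_le_card {α : ℝ} (hα : 1 < α) {Q : X → ℝ} (hQ : IsPMF Q)
    {W : X → Y → ℝ} (hW : ∀ x, IsPMF (W x)) :
    sibSum α Q W ≤ (Fintype.card Y : ℝ) := by
  have hα0 : 0 < α := lt_trans one_pos hα
  have h1 : ∀ y, (∑ x, Q x * W x y ^ α) ^ (1 / α) ≤ 1 := by
    intro y
    have hsum : ∑ x, Q x * W x y ^ α ≤ 1 := by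
      calc ∑ x, Q x * W x y ^ α ≤ ∑ x, Q x := by
            refine Finset.sum_le_sum fun x _ => ?_
            have hle1 : W x y ≤ 1 := by
              have := (hW x).2
              calc W x y ≤ ∑ y', W x y' :=
                    Finset.single_le_sum (fun y' _ => (hW x).1 y') (Finset.mem_univ y)
                _ = 1 := this
            have : W x y ^ α ≤ 1 :=
              Real.rpow_le_one ((hW x).1 y) hle1 (le_of_lt hα0)
            nlinarith [hQ.1 x]
        _ = 1 := hQ.2
    have hnn : 0 ≤ ∑ x, Q x * W x y ^ α :=
      Finset.sum_nonneg fun x _ => mul_nonneg (hQ.1 x) (Real.rpow_nonneg ((hW x).1 y) α)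
    calc (∑ x, Q x * W x y ^ α) ^ (1 / α) ≤ 1 ^ (1/α : ℝ) :=
          Real.rpow_le_rpow hnn hsum (by positivity)
      _ = 1 := Real.one_rpow _
  calc sibSum α Q W ≤ ∑ _y : Y, (1 : ℝ) := Finset.sum_le_sum fun y _ => h1 y
    _ = (Fintype.card Y : ℝ) := by rw [Finset.sum_const, Finset.card_univ, nsmul_eq_mul, mul_one]

lemma sibsonMI_le_bound {α : ℝ} (hα : 1 < α) {Q : X → ℝ} (hQ : IsPMF Q)
    {W : X → Y → ℝ} (hW : ∀ x, IsPMF (W x)) :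
    sibsonMI α Q W ≤ (α / (α - 1)) * Real.log (Fintype.card Y : ℝ) := by
  have hc : 0 ≤ α / (α - 1) := by
    apply div_nonneg <;> linarith
  have hpos := sibSum_pos hα hQ hW
  have hle := sibSum_le_card hα hQ hW
  have : Real.log (sibSum α Q W) ≤ Real.log (Fintype.card Y : ℝ) :=
    Real.log_le_log hpos hle
  exact mul_le_mul_of_nonneg_left this hc

lemma bddAbove_leakSet (α : ℝ) (hα : 1 < α) {W : X → Y → ℝ} (hW : ∀ x, IsPMF (W x)) :
    BddAbove {v : ℝ | ∃ Q : X → ℝ, IsPMF Q ∧ v = sibsonMI α Q W} := by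
  refine ⟨(α / (α - 1)) * Real.log (Fintype.card Y : ℝ), ?_⟩
  rintro v ⟨Q, hQ, rfl⟩
  exact sibsonMI_le_bound hα hQ hW

end Aux

/-- the maximal α-leakage is quasi-convex in the channel. -/
theorem maxAlphaLeakage_quasiConvex {X Y : Type}
    [Fintype X] [Fintype Y] [Nonempty X] [Nonempty Y]
    (α : ℝ) (hα : 1 < α)
    (W₀ W₁ : X → Y → ℝ) (hW₀ : ∀ x, IsPMF (W₀ x)) (hW₁ : ∀ x, IsPMF (W₁ x))
    (lam : ℝ) (hlam : lam ∈ Set.Icc (0 : ℝ) 1) :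
    maxAlphaLeakage α (fun x y => lam * W₀ x y + (1 - lam) * W₁ x y) ≤
      max (maxAlphaLeakage α W₀) (maxAlphaLeakage α W₁) := by
  obtain ⟨hl0, hl1⟩ := hlam
  have hl1' : 0 ≤ 1 - lam := by linarith
  have hα0 : 0 < α := lt_trans one_pos hα
  have hαne : α ≠ 0 := ne_of_gt hα0
  set Wm : X → Y → ℝ := fun x y => lam * W₀ x y + (1 - lam) * W₁ x y with hWm
  have hWmPMF : ∀ x, IsPMF (Wm x) := by
    intro x
    constructor
    · intro y
      exact add_nonneg (mul_nonneg hl0 ((hW₀ x).1 y)) (mul_nonneg hl1' ((hW₁ x).1 y))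
    · simp only [hWm]
      rw [Finset.sum_add_distrib, ← Finset.mul_sum, ← Finset.mul_sum, (hW₀ x).2, (hW₁ x).2]
      ring
  -- the set for the mixture channel
  apply csSup_le
  · -- nonempty: uniform pmf
    obtain ⟨x₀⟩ := ‹Nonempty X›
    refine ⟨sibsonMI α (fun _ => (Fintype.card X : ℝ)⁻¹) Wm, ⟨fun _ => (Fintype.card X : ℝ)⁻¹, ⟨?_, ?_⟩, rfl⟩⟩
    · intro x; positivity
    · have hcard : (Fintype.card X : ℝ) ≠ 0 := Nat.cast_ne_zero.mpr Fintype.card_ne_zero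
      rw [Finset.sum_const, Finset.card_univ, nsmul_eq_mul, mul_inv_cancel₀ hcard]
  rintro v ⟨Q, hQ, rfl⟩
  -- key: sibSum of the mixture is ≤ convex combination
  have hQ0 := hQ.1
  have key : sibSum α Q Wm ≤ lam * sibSum α Q W₀ + (1 - lam) * sibSum α Q W₁ := by
    unfold sibSum
    rw [Finset.mul_sum, Finset.mul_sum, ← Finset.sum_add_distrib]
    refine Finset.sum_le_sum fun y _ => ?_
    -- Minkowski with f x = lam * Q x ^ (1/α) * W₀ x y, g = (1-lam) * ...
    have hrw : ∀ (W : X → Y → ℝ) (hW : ∀ x, IsPMF (W x)) (c : ℝ) (hc : 0 ≤ c) (x : X),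
        (c * (Q x ^ (1/α : ℝ) * W x y)) ^ α = c ^ α * (Q x * W x y ^ α) := by
      intro W hW c hc x
      rw [Real.mul_rpow hc (mul_nonneg (Real.rpow_nonneg (hQ0 x) _) ((hW x).1 y)),
        Real.mul_rpow (Real.rpow_nonneg (hQ0 x) _) ((hW x).1 y),
        ← Real.rpow_mul (hQ0 x), one_div, inv_mul_cancel₀ hαne, Real.rpow_one]
    have mink := Real.Lp_add_le_of_nonneg (Finset.univ : Finset X)
      (f := fun x => lam * (Q x ^ (1/α : ℝ) * W₀ x y))
      (g := fun x => (1 - lam) * (Q x ^ (1/α : ℝ) * W₁ x y))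
      (le_of_lt hα)
      (fun x _ => mul_nonneg hl0 (mul_nonneg (Real.rpow_nonneg (hQ0 x) _) ((hW₀ x).1 y)))
      (fun x _ => mul_nonneg hl1' (mul_nonneg (Real.rpow_nonneg (hQ0 x) _) ((hW₁ x).1 y)))
    have e0 : ∀ x : X, lam * (Q x ^ (1/α : ℝ) * W₀ x y) + (1 - lam) * (Q x ^ (1/α : ℝ) * W₁ x y)
        = Q x ^ (1/α : ℝ) * Wm x y := by intro x; simp only [hWm]; ring
    have eWm : (∑ x, Q x * Wm x y ^ α) ^ (1/α : ℝ)
        ≤ lam * (∑ x, Q x * W₀ x y ^ α) ^ (1/α : ℝ)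
          + (1 - lam) * (∑ x, Q x * W₁ x y ^ α) ^ (1/α : ℝ) := by
      have l1 : ∑ x, (Q x ^ (1/α : ℝ) * Wm x y) ^ α = ∑ x, Q x * Wm x y ^ α := by
        refine Finset.sum_congr rfl fun x _ => ?_
        have := hrw Wm hWmPMF 1 zero_le_one x
        simpa using this
      have l2 : ∑ x, (lam * (Q x ^ (1/α : ℝ) * W₀ x y)) ^ α = lam ^ α * ∑ x, Q x * W₀ x y ^ α := by
        rw [Finset.mul_sum]; exact Finset.sum_congr rfl fun x _ => hrw W₀ hW₀ lam hl0 x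
      have l3 : ∑ x, ((1 - lam) * (Q x ^ (1/α : ℝ) * W₁ x y)) ^ α
          = (1 - lam) ^ α * ∑ x, Q x * W₁ x y ^ α := by
        rw [Finset.mul_sum]; exact Finset.sum_congr rfl fun x _ => hrw W₁ hW₁ (1 - lam) hl1' x
      have hs0 : 0 ≤ ∑ x, Q x * W₀ x y ^ α :=
        Finset.sum_nonneg fun x _ => mul_nonneg (hQ0 x) (Real.rpow_nonneg ((hW₀ x).1 y) α)
      have hs1 : 0 ≤ ∑ x, Q x * W₁ x y ^ α :=
        Finset.sum_nonneg fun x _ => mul_nonneg (hQ0 x) (Real.rpow_nonneg ((hW₁ x).1 y) α)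
      have c0 : (lam ^ α * ∑ x, Q x * W₀ x y ^ α) ^ (1/α : ℝ)
          = lam * (∑ x, Q x * W₀ x y ^ α) ^ (1/α : ℝ) := by
        rw [Real.mul_rpow (Real.rpow_nonneg hl0 α) hs0, ← Real.rpow_mul hl0]
        rw [mul_one_div, div_self hαne, Real.rpow_one]
      have c1 : ((1 - lam) ^ α * ∑ x, Q x * W₁ x y ^ α) ^ (1/α : ℝ)
          = (1 - lam) * (∑ x, Q x * W₁ x y ^ α) ^ (1/α : ℝ) := by
        rw [Real.mul_rpow (Real.rpow_nonneg hl1' α) hs1, ← Real.rpow_mul hl1']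
        rw [mul_one_div, div_self hαne, Real.rpow_one]
      calc (∑ x, Q x * Wm x y ^ α) ^ (1/α : ℝ)
          = (∑ x, (lam * (Q x ^ (1/α : ℝ) * W₀ x y) + (1 - lam) * (Q x ^ (1/α : ℝ) * W₁ x y)) ^ α) ^ (1/α : ℝ) := by
            rw [← l1]; congr 1; exact Finset.sum_congr rfl fun x _ => by rw [e0 x]
        _ ≤ (∑ x, (lam * (Q x ^ (1/α : ℝ) * W₀ x y)) ^ α) ^ (1/α : ℝ)
            + (∑ x, ((1 - lam) * (Q x ^ (1/α : ℝ) * W₁ x y)) ^ α) ^ (1/α : ℝ) := mink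
        _ = lam * (∑ x, Q x * W₀ x y ^ α) ^ (1/α : ℝ)
            + (1 - lam) * (∑ x, Q x * W₁ x y ^ α) ^ (1/α : ℝ) := by rw [l2, l3, c0, c1]
    exact eWm
  -- convex combination ≤ max
  have hmax : sibSum α Q Wm ≤ max (sibSum α Q W₀) (sibSum α Q W₁) := by
    have h0 : sibSum α Q W₀ ≤ max (sibSum α Q W₀) (sibSum α Q W₁) := le_max_left _ _
    have h1 : sibSum α Q W₁ ≤ max (sibSum α Q W₀) (sibSum α Q W₁) := le_max_right _ _
    nlinarith [key]
  -- pass to sibsonMI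
  have hc : 0 ≤ α / (α - 1) := by apply div_nonneg <;> linarith
  have hposm := sibSum_pos hα hQ hWmPMF
  have hsib : sibsonMI α Q Wm ≤ max (sibsonMI α Q W₀) (sibsonMI α Q W₁) := by
    unfold sibsonMI
    rcases le_total (sibSum α Q W₀) (sibSum α Q W₁) with h | h
    · have : sibSum α Q Wm ≤ sibSum α Q W₁ := by simpa [max_eq_right h] using hmax
      have hlog : Real.log (sibSum α Q Wm) ≤ Real.log (sibSum α Q W₁) :=
        Real.log_le_log hposm this
      exact le_max_of_le_right (mul_le_mul_of_nonneg_left (by exact hlog) hc)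
    · have : sibSum α Q Wm ≤ sibSum α Q W₀ := by simpa [max_eq_left h] using hmax
      have hlog : Real.log (sibSum α Q Wm) ≤ Real.log (sibSum α Q W₀) :=
        Real.log_le_log hposm this
      exact le_max_of_le_left (mul_le_mul_of_nonneg_left (by exact hlog) hc)
  -- and each sibsonMI ≤ corresponding sSup
  have h0 : sibsonMI α Q W₀ ≤ maxAlphaLeakage α W₀ :=
    le_csSup (bddAbove_leakSet α hα hW₀) ⟨Q, hQ, rfl⟩
  have h1 : sibsonMI α Q W₁ ≤ maxAlphaLeakage α W₁ :=
    le_csSup (bddAbove_leakSet α hα hW₁) ⟨Q, hQ, rfl⟩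
  calc sibsonMI α Q Wm ≤ max (sibsonMI α Q W₀) (sibsonMI α Q W₁) := hsib
    _ ≤ max (maxAlphaLeakage α W₀) (maxAlphaLeakage α W₁) := max_le_max h0 h1
end

section
/- Let 𝒳, 𝒴 be nonempty finite sets, α ∈ (1,∞), and W a channel from 𝒳 to 𝒴. Then sup over probability mass functions Q on 𝒳 of I_α^S(Q,W) ≤ log |𝒳|. Moreover, if for every y ∈ 𝒴 there is exactly one x_y ∈ 𝒳 with W(y|x_y) > 0 (so that X is a deterministic function of Y), then sup_Q I_α^S(Q,W) = log |𝒳|, and the supremum is attained by the uniform distribution on 𝒳. -/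
open Real BigOperators

lemma my_rpow_add_le {a b p : ℝ} (ha : 0 ≤ a) (hb : 0 ≤ b)
    (hp0 : 0 ≤ p) (hp1 : p ≤ 1) : (a + b) ^ p ≤ a ^ p + b ^ p := by
  have h := NNReal.rpow_add_le_add_rpow a.toNNReal b.toNNReal hp0 hp1
  calc (a + b) ^ p = (((a.toNNReal + b.toNNReal : NNReal) : ℝ)) ^ p := by
        rw [NNReal.coe_add, Real.coe_toNNReal a ha, Real.coe_toNNReal b hb]
    _ = (((a.toNNReal + b.toNNReal) ^ p : NNReal) : ℝ) := by
        rw [NNReal.coe_rpow]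
    _ ≤ ((a.toNNReal ^ p + b.toNNReal ^ p : NNReal) : ℝ) := by exact_mod_cast h
    _ = a ^ p + b ^ p := by
        rw [NNReal.coe_add, NNReal.coe_rpow, NNReal.coe_rpow,
          Real.coe_toNNReal a ha, Real.coe_toNNReal b hb]

lemma my_rpow_sum_le_sum_rpow {ι : Type*} (s : Finset ι) (f : ι → ℝ) {p : ℝ}
    (hf : ∀ i, 0 ≤ f i) (hp0 : 0 < p) (hp1 : p ≤ 1) :
    (∑ i ∈ s, f i) ^ p ≤ ∑ i ∈ s, f i ^ p := by
  induction s using Finset.cons_induction with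
  | empty => simp [Real.zero_rpow hp0.ne']
  | cons a s ha ih =>
    rw [Finset.sum_cons, Finset.sum_cons]
    calc (f a + ∑ i ∈ s, f i) ^ p ≤ f a ^ p + (∑ i ∈ s, f i) ^ p :=
          my_rpow_add_le (hf a) (Finset.sum_nonneg fun i _ => hf i) hp0.le hp1
      _ ≤ _ := by linarith [ih]

/-- the maximal α-leakage is at most `log |X|`; if every column
of the channel has exactly one nonzero entry (X is a deterministic function of
Y), then it equals `log |X|` and is attained by the uniform distribution. -/
theorem maxAlphaLeakage_le_log_card {X Y : Type}
    [Fintype X] [Fintype Y] [Nonempty X] [Nonempty Y]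
    (α : ℝ) (hα : 1 < α)
    (W : X → Y → ℝ) (hW : ∀ x, IsPMF (W x)) :
    maxAlphaLeakage α W ≤ Real.log (Fintype.card X) ∧
    ((∀ y, ∃! x, 0 < W x y) →
      maxAlphaLeakage α W = Real.log (Fintype.card X) ∧
      sibsonMI α (fun _ => (Fintype.card X : ℝ)⁻¹) W
        = Real.log (Fintype.card X)) := by
  have hn0 : (0:ℝ) < (Fintype.card X : ℝ) := by exact_mod_cast Fintype.card_pos
  have hα0 : (0:ℝ) < α := lt_trans one_pos hα
  have hαne : α ≠ 0 := hα0.ne'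
  have hα1ne : α - 1 ≠ 0 := sub_ne_zero.2 hα.ne'
  have h1α : 0 < 1 / α := by positivity
  have h1α1 : 1 / α ≤ 1 := by
    rw [div_le_one hα0]; exact hα.le
  have hc : 0 < α / (α - 1) := div_pos hα0 (by linarith)
  have hexp : (α / (α - 1)) * (1 - 1 / α) = 1 := by
    field_simp
  have hinvpow : (Fintype.card X : ℝ)⁻¹ ^ (1/α) * (Fintype.card X : ℝ)
      = (Fintype.card X : ℝ) ^ (1 - 1/α) := by
    rw [Real.inv_rpow hn0.le, ← Real.rpow_neg hn0.le]
    nth_rewrite 2 [← Real.rpow_one ((Fintype.card X : ℝ))]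
    rw [← Real.rpow_add hn0]
    congr 1; ring
  -- the key upper bound on the inner sum
  have hSle : ∀ Q : X → ℝ, IsPMF Q →
      ∑ y, (∑ x, Q x * W x y ^ α) ^ (1/α) ≤ (Fintype.card X : ℝ) ^ (1 - 1/α) := by
    intro Q hQ
    have step1 : ∀ y, (∑ x, Q x * W x y ^ α) ^ (1/α) ≤ ∑ x, Q x ^ (1/α) * W x y := by
      intro y
      calc (∑ x, Q x * W x y ^ α) ^ (1/α)
          ≤ ∑ x, (Q x * W x y ^ α) ^ (1/α) :=
            my_rpow_sum_le_sum_rpow _ _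
              (fun x => mul_nonneg (hQ.1 x) (Real.rpow_nonneg ((hW x).1 y) α)) h1α h1α1
        _ = ∑ x, Q x ^ (1/α) * W x y := Finset.sum_congr rfl (fun x _ => by
            rw [Real.mul_rpow (hQ.1 x) (Real.rpow_nonneg ((hW x).1 y) α),
              ← Real.rpow_mul ((hW x).1 y), mul_one_div_cancel hαne, Real.rpow_one])
    have step2 : ∑ y, ∑ x, Q x ^ (1/α) * W x y = ∑ x, Q x ^ (1/α) := by
      rw [Finset.sum_comm]
      exact Finset.sum_congr rfl (fun x _ => by rw [← Finset.mul_sum, (hW x).2, mul_one])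
    have step3 : ∑ x, Q x ^ (1/α) ≤ (Fintype.card X : ℝ) ^ (1 - 1/α) := by
      have jensen := Real.arith_mean_le_rpow_mean Finset.univ
        (fun _ : X => (Fintype.card X : ℝ)⁻¹) (fun x => Q x ^ (1/α))
        (fun i _ => inv_nonneg.2 hn0.le)
        (by rw [Finset.sum_const, Finset.card_univ, nsmul_eq_mul, mul_inv_cancel₀ hn0.ne'])
        (fun i _ => Real.rpow_nonneg (hQ.1 i) _) hα.le
      have hzz : ∀ x : X, (Q x ^ (1/α)) ^ α = Q x := by
        intro x
        rw [← Real.rpow_mul (hQ.1 x), one_div_mul_cancel hαne, Real.rpow_one]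
      simp only [hzz] at jensen
      rw [← Finset.mul_sum, ← Finset.mul_sum, hQ.2, mul_one] at jensen
      rw [inv_mul_le_iff₀ hn0] at jensen
      calc ∑ x, Q x ^ (1/α)
          ≤ (Fintype.card X : ℝ) * (Fintype.card X : ℝ)⁻¹ ^ (1/α) := jensen
        _ = _ := by rw [mul_comm, hinvpow]
    calc ∑ y, (∑ x, Q x * W x y ^ α) ^ (1/α)
        ≤ ∑ y, ∑ x, Q x ^ (1/α) * W x y := Finset.sum_le_sum (fun y _ => step1 y)
      _ = ∑ x, Q x ^ (1/α) := step2
      _ ≤ _ := step3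
  -- positivity of the sum
  have hSpos : ∀ Q : X → ℝ, IsPMF Q →
      0 < ∑ y, (∑ x, Q x * W x y ^ α) ^ (1/α) := by
    intro Q hQ
    obtain ⟨x0, hx0⟩ : ∃ x0, 0 < Q x0 := by
      by_contra h
      push_neg at h
      have : ∑ x, Q x = 0 :=
        Finset.sum_eq_zero (fun x _ => le_antisymm (h x) (hQ.1 x))
      rw [hQ.2] at this; norm_num at this
    obtain ⟨y0, hy0⟩ : ∃ y0, 0 < W x0 y0 := by
      by_contra h
      push_neg at h
      have : ∑ y, W x0 y = 0 :=
        Finset.sum_eq_zero (fun y _ => le_antisymm (h y) ((hW x0).1 y))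
      rw [(hW x0).2] at this; norm_num at this
    have hinner : 0 < ∑ x, Q x * W x y0 ^ α := by
      apply Finset.sum_pos'
      · exact fun x _ => mul_nonneg (hQ.1 x) (Real.rpow_nonneg ((hW x).1 y0) α)
      · exact ⟨x0, Finset.mem_univ x0,
          mul_pos hx0 (Real.rpow_pos_of_pos hy0 α)⟩
    apply Finset.sum_pos'
    · exact fun y _ => Real.rpow_nonneg
        (Finset.sum_nonneg fun x _ => mul_nonneg (hQ.1 x) (Real.rpow_nonneg ((hW x).1 y) α)) _
    · exact ⟨y0, Finset.mem_univ y0, Real.rpow_pos_of_pos hinner _⟩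
  -- the bound on Sibson MI
  have hMI : ∀ Q : X → ℝ, IsPMF Q →
      sibsonMI α Q W ≤ Real.log (Fintype.card X) := by
    intro Q hQ
    unfold sibsonMI
    have hlog : Real.log (∑ y, (∑ x, Q x * W x y ^ α) ^ (1/α))
        ≤ Real.log ((Fintype.card X : ℝ) ^ (1 - 1/α)) :=
      Real.log_le_log (hSpos Q hQ) (hSle Q hQ)
    calc (α / (α - 1)) * Real.log (∑ y, (∑ x, Q x * W x y ^ α) ^ (1/α))
        ≤ (α / (α - 1)) * Real.log ((Fintype.card X : ℝ) ^ (1 - 1/α)) :=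
          mul_le_mul_of_nonneg_left hlog hc.le
      _ = Real.log (Fintype.card X) := by
          rw [Real.log_rpow hn0, ← mul_assoc, hexp, one_mul]
  have huni : IsPMF (fun _ : X => (Fintype.card X : ℝ)⁻¹) := by
    constructor
    · intro x; exact inv_nonneg.2 hn0.le
    · rw [Finset.sum_const, Finset.card_univ, nsmul_eq_mul, mul_inv_cancel₀ hn0.ne']
  have hbdd : ∀ v ∈ {v : ℝ | ∃ Q : X → ℝ, IsPMF Q ∧ v = sibsonMI α Q W},
      v ≤ Real.log (Fintype.card X) := by
    rintro v ⟨Q, hQ, rfl⟩; exact hMI Q hQ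
  have hne : {v : ℝ | ∃ Q : X → ℝ, IsPMF Q ∧ v = sibsonMI α Q W}.Nonempty :=
    ⟨_, ⟨_, huni, rfl⟩⟩
  have part1 : maxAlphaLeakage α W ≤ Real.log (Fintype.card X) :=
    csSup_le hne hbdd
  refine ⟨part1, fun hdet => ?_⟩
  choose f hf using hdet
  have hzero : ∀ y x, x ≠ f y → W x y = 0 := by
    intro y x hx
    by_contra h
    exact hx ((hf y).2 x (lt_of_le_of_ne ((hW x).1 y) (Ne.symm h)))
  have hcol : ∀ y, ∑ x, W x y = W (f y) y := by
    intro y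
    exact Finset.sum_eq_single (f y) (fun x _ hx => hzero y x hx) (by simp)
  have hsumW : ∑ y, W (f y) y = (Fintype.card X : ℝ) := by
    have h1 : ∑ y, W (f y) y = ∑ y, ∑ x, W x y :=
      Finset.sum_congr rfl (fun y _ => (hcol y).symm)
    rw [h1, Finset.sum_comm]
    have h2 : ∀ x : X, ∑ y, W x y = 1 := fun x => (hW x).2
    simp [h2, Finset.card_univ]
  have hinner : ∀ y, ∑ x, (Fintype.card X : ℝ)⁻¹ * W x y ^ α
      = (Fintype.card X : ℝ)⁻¹ * W (f y) y ^ α := by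
    intro y
    exact Finset.sum_eq_single (f y)
      (fun x _ hx => by rw [hzero y x hx, Real.zero_rpow hαne, mul_zero]) (by simp)
  have hS : ∑ y, (∑ x, (Fintype.card X : ℝ)⁻¹ * W x y ^ α) ^ (1/α)
      = (Fintype.card X : ℝ) ^ (1 - 1/α) := by
    calc ∑ y, (∑ x, (Fintype.card X : ℝ)⁻¹ * W x y ^ α) ^ (1/α)
        = ∑ y, (Fintype.card X : ℝ)⁻¹ ^ (1/α) * W (f y) y := by
          refine Finset.sum_congr rfl (fun y _ => ?_)
          rw [hinner y, Real.mul_rpow (inv_nonneg.2 hn0.le)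
            (Real.rpow_nonneg ((hW (f y)).1 y) α),
            ← Real.rpow_mul ((hW (f y)).1 y), mul_one_div_cancel hαne, Real.rpow_one]
      _ = (Fintype.card X : ℝ)⁻¹ ^ (1/α) * ∑ y, W (f y) y := by rw [Finset.mul_sum]
      _ = (Fintype.card X : ℝ) ^ (1 - 1/α) := by rw [hsumW, hinvpow]
  have huniMI : sibsonMI α (fun _ => (Fintype.card X : ℝ)⁻¹) W
      = Real.log (Fintype.card X) := by
    unfold sibsonMI
    rw [hS, Real.log_rpow hn0, ← mul_assoc, hexp, one_mul]
  refine ⟨le_antisymm part1 ?_, huniMI⟩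
  have := le_csSup ⟨Real.log (Fintype.card X), hbdd⟩
    (show Real.log (Fintype.card X) ∈
      {v : ℝ | ∃ Q : X → ℝ, IsPMF Q ∧ v = sibsonMI α Q W} from ⟨_, huni, huniMI.symm⟩)
  exact this
end

section
/- Let 𝒳, 𝒴 be nonempty finite sets, α ∈ (1,∞), and W a channel from 𝒳 to 𝒴. Then sup over probability mass functions Q on 𝒳 of I_α^S(Q,W) ≥ I_α^S(U,W), where U is the uniform distribution on 𝒳, i.e., L_α^max(W) ≥ (α/(α−1)) · log [ ∑_{y∈𝒴} (∑_{x∈𝒳} W(y|x)^α)^{1/α} / |𝒳|^{1/α} ]. Moreover, if W is symmetric — meaning every row of the matrix (W(y|x)) is a permutation of every other row and every column is a permutation of every other column — then equality holds: the uniform input distribution achieves the supremum. -/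
open Real BigOperators

/-- Tangent-line bound for the concave function `t ↦ t ^ β`, `0 < β < 1`. -/
lemma rpow_tangent {β s t : ℝ} (hβ0 : 0 < β) (hβ1 : β < 1) (hs : 0 < s) (ht : 0 ≤ t) :
    t ^ β ≤ β * s ^ (β - 1) * t + (1 - β) * s ^ β := by
  have h := Real.geom_mean_le_arith_mean2_weighted (w₁ := β) (w₂ := 1 - β) (p₁ := t)
    (p₂ := s) hβ0.le (by linarith) ht hs.le (by ring)
  have hmul := mul_le_mul_of_nonneg_right h (Real.rpow_nonneg hs.le (β - 1))
  calc t ^ β = t ^ β * s ^ (1 - β) * s ^ (β - 1) := by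
        rw [mul_assoc, ← Real.rpow_add hs]
        have : (1 - β) + (β - 1) = 0 := by ring
        rw [this, Real.rpow_zero, mul_one]
    _ ≤ (β * t + (1 - β) * s) * s ^ (β - 1) := hmul
    _ = β * s ^ (β - 1) * t + (1 - β) * (s ^ (β - 1) * s ^ (1 : ℝ)) := by
        rw [Real.rpow_one]; ring
    _ = β * s ^ (β - 1) * t + (1 - β) * s ^ β := by
        rw [← Real.rpow_add hs]
        norm_num

/-- the maximal α-leakage is lower bounded by the Sibson MI at
the uniform input distribution, with equality when the channel is symmetric
(rows are permutations of each other, and so are columns). -/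
theorem maxAlphaLeakage_ge_uniform_sibson {X Y : Type}
    [Fintype X] [Fintype Y] [Nonempty X] [Nonempty Y]
    (α : ℝ) (hα : 1 < α)
    (W : X → Y → ℝ) (hW : ∀ x, IsPMF (W x)) :
    (α / (α - 1)) * Real.log
        ((∑ y, (∑ x, W x y ^ α) ^ (1 / α)) / (Fintype.card X : ℝ) ^ (1 / α))
      ≤ maxAlphaLeakage α W ∧
    (((∀ x x' : X, ∃ σ : Equiv.Perm Y, ∀ y, W x' y = W x (σ y)) ∧
      (∀ y y' : Y, ∃ τ : Equiv.Perm X, ∀ x, W x y' = W (τ x) y)) →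
      maxAlphaLeakage α W =
        (α / (α - 1)) * Real.log
          ((∑ y, (∑ x, W x y ^ α) ^ (1 / α)) /
            (Fintype.card X : ℝ) ^ (1 / α))) := by
  classical
  set β : ℝ := 1 / α with hβdef
  have hα0 : (0 : ℝ) < α := by linarith
  have hβ0 : 0 < β := by positivity
  have hβ1 : β < 1 := by
    rw [hβdef, div_lt_one hα0]; linarith
  have hcoeff : 0 < α / (α - 1) := by
    apply div_pos hα0; linarith
  set n : ℝ := (Fintype.card X : ℝ) with hndef
  have hn : 0 < n := by
    rw [hndef]; exact_mod_cast Fintype.card_pos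
  have hWnn : ∀ x y, 0 ≤ W x y := fun x => (hW x).1
  have hAnn : ∀ x y, 0 ≤ W x y ^ α := fun x y => Real.rpow_nonneg (hWnn x y) α
  -- the uniform pmf
  set U : X → ℝ := fun _ => n⁻¹ with hUdef
  have hUpmf : IsPMF U := by
    constructor
    · intro x; positivity
    · rw [hUdef]
      simp only [Finset.sum_const, nsmul_eq_mul, Finset.card_univ, ← hndef]
      exact mul_inv_cancel₀ hn.ne'
  -- Sibson MI at uniform equals the displayed expression
  have hUval : sibsonMI α U W =
      (α / (α - 1)) * Real.log
        ((∑ y, (∑ x, W x y ^ α) ^ (1 / α)) / (Fintype.card X : ℝ) ^ (1 / α)) := by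
    have hterm : ∀ y : Y, (∑ x, U x * W x y ^ α) ^ β
        = (∑ x, W x y ^ α) ^ β * (n⁻¹) ^ β := by
      intro y
      rw [hUdef]
      rw [← Finset.mul_sum, mul_comm,
        Real.mul_rpow (Finset.sum_nonneg fun x _ => hAnn x y) (by positivity)]
    have hsum : (∑ y, (∑ x, U x * W x y ^ α) ^ β)
        = (∑ y, (∑ x, W x y ^ α) ^ β) / n ^ β := by
      rw [Finset.sum_congr rfl fun y _ => hterm y, ← Finset.sum_mul,
        Real.inv_rpow hn.le, ← div_eq_mul_inv]
    simp only [sibsonMI, ← hβdef, ← hndef]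
    rw [hsum]
  -- general positivity of the inner sum
  have hFpos : ∀ Q : X → ℝ, IsPMF Q →
      0 < ∑ y, (∑ x, Q x * W x y ^ α) ^ β := by
    intro Q hQ
    obtain ⟨x₀, -, hx₀⟩ := Finset.exists_lt_of_sum_lt
      (show ∑ _x : X, (0 : ℝ) < ∑ x, Q x from by simp [hQ.2])
    obtain ⟨y₀, -, hy₀⟩ := Finset.exists_lt_of_sum_lt
      (show ∑ _y : Y, (0 : ℝ) < ∑ y, W x₀ y from by simp [(hW x₀).2])
    have hterm : 0 < ∑ x, Q x * W x y₀ ^ α := by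
      have h1 : 0 < Q x₀ * W x₀ y₀ ^ α :=
        mul_pos hx₀ (Real.rpow_pos_of_pos hy₀ α)
      have h2 : Q x₀ * W x₀ y₀ ^ α ≤ ∑ x, Q x * W x y₀ ^ α :=
        Finset.single_le_sum (fun x _ => mul_nonneg (hQ.1 x) (hAnn x y₀))
          (Finset.mem_univ x₀)
      linarith
    refine Finset.sum_pos' (fun y _ => Real.rpow_nonneg
      (Finset.sum_nonneg fun x _ => mul_nonneg (hQ.1 x) (hAnn x y)) β)
      ⟨y₀, Finset.mem_univ y₀, Real.rpow_pos_of_pos hterm β⟩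
  -- the defining set is nonempty and bounded above
  set S : Set ℝ := {v : ℝ | ∃ Q : X → ℝ, IsPMF Q ∧ v = sibsonMI α Q W} with hSdef
  have hmem : sibsonMI α U W ∈ S := ⟨U, hUpmf, rfl⟩
  have hbdd : BddAbove S := by
    refine ⟨(α / (α - 1)) * Real.log (Fintype.card Y : ℝ), ?_⟩
    rintro v ⟨Q, hQ, rfl⟩
    have hF : (∑ y, (∑ x, Q x * W x y ^ α) ^ β) ≤ (Fintype.card Y : ℝ) := by
      calc (∑ y, (∑ x, Q x * W x y ^ α) ^ β) ≤ ∑ _y : Y, (1 : ℝ) := by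
            apply Finset.sum_le_sum
            intro y _
            apply Real.rpow_le_one
              (Finset.sum_nonneg fun x _ => mul_nonneg (hQ.1 x) (hAnn x y)) ?_ hβ0.le
            calc (∑ x, Q x * W x y ^ α) ≤ ∑ x, Q x * 1 := by
                  apply Finset.sum_le_sum
                  intro x _
                  apply mul_le_mul_of_nonneg_left ?_ (hQ.1 x)
                  apply Real.rpow_le_one (hWnn x y) ?_ hα0.le
                  calc W x y ≤ ∑ y', W x y' :=
                        Finset.single_le_sum (fun y' _ => hWnn x y') (Finset.mem_univ y)
                    _ = 1 := (hW x).2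
              _ = 1 := by simp [hQ.2]
        _ = (Fintype.card Y : ℝ) := by simp
    have hlog : Real.log (∑ y, (∑ x, Q x * W x y ^ α) ^ β)
        ≤ Real.log (Fintype.card Y : ℝ) := Real.log_le_log (hFpos Q hQ) hF
    simpa [sibsonMI, ← hβdef] using mul_le_mul_of_nonneg_left hlog hcoeff.le
  constructor
  · rw [← hUval]
    exact le_csSup hbdd hmem
  · rintro ⟨hrows, hcols⟩
    -- common row sum and column sum of the matrix A x y = W x y ^ α
    obtain x₀ := Classical.arbitrary X
    obtain y₀ := Classical.arbitrary Y
    set r : ℝ := ∑ y, W x₀ y ^ α with hrdef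
    set c : ℝ := ∑ x, W x y₀ ^ α with hcdef
    have hrow : ∀ x, ∑ y, W x y ^ α = r := by
      intro x
      obtain ⟨σ, hσ⟩ := hrows x₀ x
      calc ∑ y, W x y ^ α = ∑ y, W x₀ (σ y) ^ α := by
            apply Finset.sum_congr rfl; intro y _; rw [hσ y]
        _ = r := by rw [hrdef]; exact Equiv.sum_comp σ (fun y => W x₀ y ^ α)
    have hcol : ∀ y, ∑ x, W x y ^ α = c := by
      intro y
      obtain ⟨τ, hτ⟩ := hcols y₀ y
      calc ∑ x, W x y ^ α = ∑ x, W (τ x) y₀ ^ α := by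
            apply Finset.sum_congr rfl; intro x _; rw [hτ x]
        _ = c := by rw [hcdef]; exact Equiv.sum_comp τ (fun x => W x y₀ ^ α)
    have hrpos : 0 < r := by
      obtain ⟨y₁, -, hy₁⟩ := Finset.exists_lt_of_sum_lt
        (show ∑ _y : Y, (0 : ℝ) < ∑ y, W x₀ y from by simp [(hW x₀).2])
      have := Finset.single_le_sum (fun y _ => hAnn x₀ y) (Finset.mem_univ y₁)
      have h2 : 0 < W x₀ y₁ ^ α := Real.rpow_pos_of_pos hy₁ α
      rw [hrdef]; linarith
    set m : ℝ := (Fintype.card Y : ℝ) with hmdef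
    have hm : 0 < m := by
      rw [hmdef]; exact_mod_cast Fintype.card_pos
    -- total sum counted two ways: n * r = m * c
    have htot : n * r = m * c := by
      have h1 : ∑ x, ∑ y, W x y ^ α = n * r := by
        rw [Finset.sum_congr rfl fun x _ => hrow x]
        simp [hndef, Finset.sum_const, nsmul_eq_mul]
      have h2 : ∑ x, ∑ y, W x y ^ α = m * c := by
        rw [Finset.sum_comm, Finset.sum_congr rfl fun y _ => hcol y]
        simp [hmdef, Finset.sum_const, nsmul_eq_mul]
      rw [← h1, h2]
    have hcpos : 0 < c := by
      nlinarith [mul_pos hn hrpos]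
    set s : ℝ := c / n with hsdef
    have hs : 0 < s := div_pos hcpos hn
    have hms : m * s = r := by
      rw [hsdef]; field_simp; linarith [htot]
    -- uniform input gives constant inner terms
    have hUinner : ∀ y : Y, (∑ x, U x * W x y ^ α) = s := by
      intro y
      rw [hUdef]
      simp only [← Finset.mul_sum]
      rw [hcol y, hsdef, inv_mul_eq_div]
    -- key inequality : for every pmf Q the inner sum is at most that of uniform
    have hkey : ∀ Q : X → ℝ, IsPMF Q →
        (∑ y, (∑ x, Q x * W x y ^ α) ^ β) ≤ ∑ y, (∑ x, U x * W x y ^ α) ^ β := by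
      intro Q hQ
      have hsumt : ∑ y, (∑ x, Q x * W x y ^ α) = r := by
        rw [Finset.sum_comm]
        calc ∑ x, ∑ y, Q x * W x y ^ α = ∑ x, Q x * r := by
              apply Finset.sum_congr rfl
              intro x _
              rw [← Finset.mul_sum, hrow x]
          _ = r := by rw [← Finset.sum_mul, hQ.2, one_mul]
      calc (∑ y, (∑ x, Q x * W x y ^ α) ^ β)
          ≤ ∑ y, (β * s ^ (β - 1) * (∑ x, Q x * W x y ^ α) + (1 - β) * s ^ β) := by
            apply Finset.sum_le_sum
            intro y _
            exact rpow_tangent hβ0 hβ1 hs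
              (Finset.sum_nonneg fun x _ => mul_nonneg (hQ.1 x) (hAnn x y))
        _ = β * s ^ (β - 1) * r + m * ((1 - β) * s ^ β) := by
            rw [Finset.sum_add_distrib, ← Finset.mul_sum, hsumt, Finset.sum_const,
              nsmul_eq_mul, Finset.card_univ, ← hmdef]
        _ = m * s ^ β := by
            have h1 : s ^ (β - 1) * s ^ (1 : ℝ) = s ^ β := by
              rw [← Real.rpow_add hs]; norm_num
            rw [← hms]
            rw [Real.rpow_one] at h1
            linear_combination (β * m) * h1
        _ = ∑ y, (∑ x, U x * W x y ^ α) ^ β := by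
            rw [Finset.sum_congr rfl fun y _ => by rw [hUinner y]]
            simp [hmdef, Finset.sum_const, nsmul_eq_mul]
    -- hence the sup is attained at the uniform distribution
    have hub : ∀ v ∈ S, v ≤ sibsonMI α U W := by
      rintro v ⟨Q, hQ, rfl⟩
      simp only [sibsonMI, ← hβdef]
      apply mul_le_mul_of_nonneg_left ?_ hcoeff.le
      exact Real.log_le_log (hFpos Q hQ) (hkey Q hQ)
    have : maxAlphaLeakage α W = sibsonMI α U W :=
      le_antisymm (csSup_le ⟨_, hmem⟩ hub) (le_csSup hbdd hmem)
    rw [this, hUval]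
end

section
/- Let 𝒳, 𝒴₁, 𝒴₂ be nonempty finite sets, α ∈ (1,∞), W₁ a channel from 𝒳 to 𝒴₁, and W₂ a channel from 𝒳 to 𝒴₂. Let W be the product channel from 𝒳 to 𝒴₁×𝒴₂ given by W((y₁,y₂)|x) = W₁(y₁|x)·W₂(y₂|x). Then the maximal α-leakage satisfies the composition bound: sup_Q I_α^S(Q,W) ≤ sup_Q I_α^S(Q,W₁) + sup_Q I_α^S(Q,W₂), where all suprema are over probability mass functions Q on 𝒳. -/
open Real BigOperators

section Helpers

variable {X Y : Type} [Fintype X] [Fintype Y]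

lemma inner_nonneg (α : ℝ) (Q : X → ℝ) (hQ : ∀ x, 0 ≤ Q x)
    (W : X → Y → ℝ) (hW : ∀ x y, 0 ≤ W x y) (y : Y) :
    0 ≤ ∑ x, Q x * W x y ^ α :=
  Finset.sum_nonneg fun x _ => mul_nonneg (hQ x) (Real.rpow_nonneg (hW x y) α)

lemma exists_pos_of_pmf (P : X → ℝ) (hP : IsPMF P) : ∃ x, 0 < P x := by
  by_contra h
  push_neg at h
  have : ∀ x ∈ Finset.univ, P x = 0 := fun x _ => le_antisymm (h x) (hP.1 x)
  have := Finset.sum_eq_zero this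
  rw [hP.2] at this
  norm_num at this

lemma S_pos (α : ℝ) (hα : 1 < α) (Q : X → ℝ) (hQ : IsPMF Q)
    (W : X → Y → ℝ) (hW : ∀ x, IsPMF (W x)) :
    0 < ∑ y, (∑ x, Q x * W x y ^ α) ^ (1 / α) := by
  have hα0 : (0:ℝ) < α := lt_trans one_pos hα
  obtain ⟨x, hx⟩ := exists_pos_of_pmf Q hQ
  obtain ⟨y, hy⟩ := exists_pos_of_pmf (W x) (hW x)
  apply Finset.sum_pos'
  · intro y' _
    exact Real.rpow_nonneg (inner_nonneg α Q hQ.1 W (fun x y => (hW x).1 y) y') _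
  · refine ⟨y, Finset.mem_univ y, Real.rpow_pos_of_pos ?_ _⟩
    apply Finset.sum_pos'
    · intro x' _
      exact mul_nonneg (hQ.1 x') (Real.rpow_nonneg ((hW x').1 y) α)
    · exact ⟨x, Finset.mem_univ x, mul_pos hx (Real.rpow_pos_of_pos hy α)⟩

lemma channel_le_one (W : X → Y → ℝ) (hW : ∀ x, IsPMF (W x)) (x : X) (y : Y) :
    W x y ≤ 1 := by
  have := Finset.single_le_sum (f := W x) (fun y' _ => (hW x).1 y') (Finset.mem_univ y)
  rwa [(hW x).2] at this

lemma S_le_card (α : ℝ) (hα : 1 < α) (Q : X → ℝ) (hQ : IsPMF Q)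
    (W : X → Y → ℝ) (hW : ∀ x, IsPMF (W x)) :
    ∑ y, (∑ x, Q x * W x y ^ α) ^ (1 / α) ≤ (Fintype.card Y : ℝ) := by
  have hα0 : (0:ℝ) < α := lt_trans one_pos hα
  calc ∑ y, (∑ x, Q x * W x y ^ α) ^ (1 / α)
      ≤ ∑ _y : Y, (1:ℝ) := by
        apply Finset.sum_le_sum
        intro y _
        apply Real.rpow_le_one (inner_nonneg α Q hQ.1 W (fun x y => (hW x).1 y) y)
        · calc ∑ x, Q x * W x y ^ α ≤ ∑ x, Q x * 1 := by
                apply Finset.sum_le_sum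
                intro x _
                exact mul_le_mul_of_nonneg_left
                  (Real.rpow_le_one ((hW x).1 y) (channel_le_one W hW x y) hα0.le)
                  (hQ.1 x)
            _ = 1 := by simp [hQ.2]
        · positivity
    _ = (Fintype.card Y : ℝ) := by simp [Finset.card_univ]

lemma leak_bddAbove (α : ℝ) (hα : 1 < α) (W : X → Y → ℝ) (hW : ∀ x, IsPMF (W x)) :
    BddAbove {v : ℝ | ∃ Q : X → ℝ, IsPMF Q ∧ v = sibsonMI α Q W} := by
  have hα0 : (0:ℝ) < α := lt_trans one_pos hα
  have hα1 : (0:ℝ) < α - 1 := sub_pos.mpr hα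
  refine ⟨(α / (α - 1)) * Real.log (Fintype.card Y : ℝ), ?_⟩
  rintro v ⟨Q, hQ, rfl⟩
  unfold sibsonMI
  apply mul_le_mul_of_nonneg_left _ (le_of_lt (div_pos hα0 hα1))
  exact Real.log_le_log (S_pos α hα Q hQ W hW) (S_le_card α hα Q hQ W hW)

lemma S_le_exp (α : ℝ) (hα : 1 < α) (W : X → Y → ℝ) (hW : ∀ x, IsPMF (W x))
    (Q : X → ℝ) (hQ : IsPMF Q) :
    ∑ y, (∑ x, Q x * W x y ^ α) ^ (1 / α) ≤
      Real.exp (((α - 1) / α) * maxAlphaLeakage α W) := by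
  have hα0 : (0:ℝ) < α := lt_trans one_pos hα
  have hα1 : (0:ℝ) < α - 1 := sub_pos.mpr hα
  set S := ∑ y, (∑ x, Q x * W x y ^ α) ^ (1 / α) with hS
  have hSpos : 0 < S := S_pos α hα Q hQ W hW
  have hmem : sibsonMI α Q W ∈ {v : ℝ | ∃ Q : X → ℝ, IsPMF Q ∧ v = sibsonMI α Q W} :=
    ⟨Q, hQ, rfl⟩
  have h1 : sibsonMI α Q W ≤ maxAlphaLeakage α W :=
    le_csSup (leak_bddAbove α hα W hW) hmem
  have h2 : (α / (α - 1)) * Real.log S ≤ maxAlphaLeakage α W := h1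
  have h3 : Real.log S ≤ ((α - 1) / α) * maxAlphaLeakage α W := by
    have := mul_le_mul_of_nonneg_left h2 (le_of_lt (div_pos hα1 hα0))
    calc Real.log S = ((α - 1) / α) * ((α / (α - 1)) * Real.log S) := by
          field_simp
      _ ≤ ((α - 1) / α) * maxAlphaLeakage α W := this
  calc S = Real.exp (Real.log S) := (Real.exp_log hSpos).symm
    _ ≤ Real.exp (((α - 1) / α) * maxAlphaLeakage α W) := Real.exp_le_exp.mpr h3

end Helpers

/-- composition theorem, `1 < α < ∞`: the maximal α-leakage of
the product channel is at most the sum of the individual maximal α-leakages. -/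
theorem maxAlphaLeakage_composition {X Y₁ Y₂ : Type}
    [Fintype X] [Fintype Y₁] [Fintype Y₂] [Nonempty X] [Nonempty Y₁] [Nonempty Y₂]
    (α : ℝ) (hα : 1 < α)
    (W₁ : X → Y₁ → ℝ) (hW₁ : ∀ x, IsPMF (W₁ x))
    (W₂ : X → Y₂ → ℝ) (hW₂ : ∀ x, IsPMF (W₂ x)) :
    maxAlphaLeakage α (fun x (p : Y₁ × Y₂) => W₁ x p.1 * W₂ x p.2) ≤
      maxAlphaLeakage α W₁ + maxAlphaLeakage α W₂ := by
  have hα0 : (0:ℝ) < α := lt_trans one_pos hα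
  have hα1 : (0:ℝ) < α - 1 := sub_pos.mpr hα
  set L1 := maxAlphaLeakage α W₁ with hL1
  set L2 := maxAlphaLeakage α W₂ with hL2
  set B1 := Real.exp (((α - 1) / α) * L1) with hB1
  set B2 := Real.exp (((α - 1) / α) * L2) with hB2
  set Wp : X → Y₁ × Y₂ → ℝ := fun x p => W₁ x p.1 * W₂ x p.2 with hWpdef
  have hWp : ∀ x, IsPMF (Wp x) := by
    intro x
    constructor
    · intro p; exact mul_nonneg ((hW₁ x).1 p.1) ((hW₂ x).1 p.2)
    · show ∑ p : Y₁ × Y₂, W₁ x p.1 * W₂ x p.2 = 1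
      rw [Fintype.sum_prod_type]
      simp only [← Finset.mul_sum, (hW₂ x).2, mul_one, (hW₁ x).2]
  apply csSup_le
  · exact ⟨sibsonMI α (fun _ => (Fintype.card X : ℝ)⁻¹) Wp,
      (fun _ => (Fintype.card X : ℝ)⁻¹), ⟨fun x => by positivity, by
        rw [Finset.sum_const, nsmul_eq_mul, Finset.card_univ,
          mul_inv_cancel₀ (Nat.cast_ne_zero.mpr Fintype.card_ne_zero)]⟩, rfl⟩
  rintro v ⟨Q, hQ, rfl⟩
  -- key pointwise bound for each y₁
  have key : ∀ y1 : Y₁,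
      ∑ y2 : Y₂, (∑ x, Q x * (W₁ x y1 * W₂ x y2) ^ α) ^ (1 / α)
        ≤ (∑ x, Q x * W₁ x y1 ^ α) ^ (1 / α) * B2 := by
    intro y1
    set A := ∑ x, Q x * W₁ x y1 ^ α with hA
    have hterm : ∀ x, 0 ≤ Q x * W₁ x y1 ^ α :=
      fun x => mul_nonneg (hQ.1 x) (Real.rpow_nonneg ((hW₁ x).1 y1) α)
    have hAnn : 0 ≤ A := Finset.sum_nonneg fun x _ => hterm x
    rcases eq_or_lt_of_le hAnn with hA0 | hApos
    · -- A = 0 : everything vanishes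
      have hzero : ∀ x, Q x * W₁ x y1 ^ α = 0 := by
        intro x
        have := (Finset.sum_eq_zero_iff_of_nonneg (fun x _ => hterm x)).mp hA0.symm
        exact this x (Finset.mem_univ x)
      have hZ : ∀ y2 : Y₂, (∑ x, Q x * (W₁ x y1 * W₂ x y2) ^ α) = 0 := by
        intro y2
        apply Finset.sum_eq_zero
        intro x _
        rw [Real.mul_rpow ((hW₁ x).1 y1) ((hW₂ x).1 y2), ← mul_assoc, hzero x, zero_mul]
      have : ∑ y2 : Y₂, (∑ x, Q x * (W₁ x y1 * W₂ x y2) ^ α) ^ (1 / α) = 0 := by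
        apply Finset.sum_eq_zero
        intro y2 _
        rw [hZ y2, Real.zero_rpow (one_div_ne_zero hα0.ne')]
      rw [this, ← hA0, Real.zero_rpow (one_div_ne_zero hα0.ne'), zero_mul]
    · -- A > 0 : tilt the distribution
      set Q' : X → ℝ := fun x => Q x * W₁ x y1 ^ α / A with hQ'def
      have hQ' : IsPMF Q' := by
        constructor
        · intro x; exact div_nonneg (hterm x) hAnn
        · rw [hQ'def]; simp only
          rw [← Finset.sum_div, ← hA, div_self hApos.ne']
      have hrw : ∀ y2 : Y₂,
          (∑ x, Q x * (W₁ x y1 * W₂ x y2) ^ α) = A * ∑ x, Q' x * W₂ x y2 ^ α := by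
        intro y2
        rw [Finset.mul_sum]
        apply Finset.sum_congr rfl
        intro x _
        rw [Real.mul_rpow ((hW₁ x).1 y1) ((hW₂ x).1 y2), hQ'def]
        simp only
        field_simp
      calc ∑ y2 : Y₂, (∑ x, Q x * (W₁ x y1 * W₂ x y2) ^ α) ^ (1 / α)
          = ∑ y2 : Y₂, A ^ (1 / α) * (∑ x, Q' x * W₂ x y2 ^ α) ^ (1 / α) := by
            apply Finset.sum_congr rfl
            intro y2 _
            rw [hrw y2, Real.mul_rpow hAnn
              (inner_nonneg α Q' hQ'.1 W₂ (fun x y => (hW₂ x).1 y) y2)]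
        _ = A ^ (1 / α) * ∑ y2 : Y₂, (∑ x, Q' x * W₂ x y2 ^ α) ^ (1 / α) :=
            (Finset.mul_sum _ _ _).symm
        _ ≤ A ^ (1 / α) * B2 :=
            mul_le_mul_of_nonneg_left (S_le_exp α hα W₂ hW₂ Q' hQ')
              (Real.rpow_nonneg hAnn _)
  have hT : (∑ p : Y₁ × Y₂, (∑ x, Q x * Wp x p ^ α) ^ (1 / α)) ≤ B1 * B2 := by
    rw [Fintype.sum_prod_type]
    calc ∑ y1, ∑ y2, (∑ x, Q x * (W₁ x y1 * W₂ x y2) ^ α) ^ (1 / α)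
        ≤ ∑ y1, (∑ x, Q x * W₁ x y1 ^ α) ^ (1 / α) * B2 :=
          Finset.sum_le_sum fun y1 _ => key y1
      _ = (∑ y1, (∑ x, Q x * W₁ x y1 ^ α) ^ (1 / α)) * B2 := (Finset.sum_mul _ _ _).symm
      _ ≤ B1 * B2 := mul_le_mul_of_nonneg_right (S_le_exp α hα W₁ hW₁ Q hQ)
          (Real.exp_pos _).le
  have hTpos : 0 < ∑ p : Y₁ × Y₂, (∑ x, Q x * Wp x p ^ α) ^ (1 / α) :=
    S_pos α hα Q hQ Wp hWp
  have hlogT : Real.log (∑ p : Y₁ × Y₂, (∑ x, Q x * Wp x p ^ α) ^ (1 / α))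
      ≤ ((α - 1) / α) * (L1 + L2) := by
    calc Real.log (∑ p : Y₁ × Y₂, (∑ x, Q x * Wp x p ^ α) ^ (1 / α))
        ≤ Real.log (B1 * B2) := Real.log_le_log hTpos hT
      _ = ((α - 1) / α) * (L1 + L2) := by
          rw [hB1, hB2, Real.log_mul (Real.exp_ne_zero _) (Real.exp_ne_zero _),
            Real.log_exp, Real.log_exp]
          ring
  have hfinal : sibsonMI α Q Wp ≤ (α / (α - 1)) * (((α - 1) / α) * (L1 + L2)) := by
    unfold sibsonMI
    exact mul_le_mul_of_nonneg_left hlogT (le_of_lt (div_pos hα0 hα1))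
  calc sibsonMI α Q Wp ≤ (α / (α - 1)) * (((α - 1) / α) * (L1 + L2)) := hfinal
    _ = L1 + L2 := by field_simp
end

section
/- Let 𝒳, 𝒴₁, 𝒴₂ be nonempty finite sets and let P be a joint probability mass function on 𝒳×𝒴₁×𝒴₂ such that Y₁ and Y₂ are conditionally independent given X, i.e., P(x,y₁,y₂)·P_X(x) = P_{XY₁}(x,y₁)·P_{XY₂}(x,y₂) for all x, y₁, y₂. Then the Shannon mutual information satisfies I(X; (Y₁,Y₂)) ≤ I(X;Y₁) + I(X;Y₂). -/
open Real BigOperators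

/-- Shannon mutual information of a joint pmf `P` on `A × B` (sum over pairs
of positive probability). -/
noncomputable def shannonMI {A B : Type} [Fintype A] [Fintype B]
    (P : A → B → ℝ) : ℝ :=
  ∑ a, ∑ b,
    if 0 < P a b then
      P a b * Real.log (P a b / ((∑ b', P a b') * (∑ a', P a' b)))
    else 0

/-- A joint probability mass function on `X × Y₁ × Y₂`. -/
def IsPMF3 {X Y₁ Y₂ : Type} [Fintype X] [Fintype Y₁] [Fintype Y₂]
    (P : X → Y₁ → Y₂ → ℝ) : Prop :=
  (∀ x y₁ y₂, 0 ≤ P x y₁ y₂) ∧ ∑ x, ∑ y₁, ∑ y₂, P x y₁ y₂ = 1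

lemma ite_sum_mul {ι : Type} [Fintype ι] (f : ι → ℝ) (c : ℝ) (hf : ∀ i, 0 ≤ f i) :
    (if 0 < ∑ i, f i then (∑ i, f i) * c else 0)
      = ∑ i, (if 0 < f i then f i * c else 0) := by
  have h : ∀ i, (if 0 < f i then f i * c else 0) = f i * c := by
    intro i
    by_cases h : 0 < f i
    · simp [h]
    · have : f i = 0 := le_antisymm (not_lt.mp h) (hf i)
      simp [this]
  rw [Finset.sum_congr rfl (fun i _ => h i), ← Finset.sum_mul]
  by_cases h : 0 < ∑ i, f i
  · simp [h]
  · have h0 : ∑ i, f i = 0 :=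
      le_antisymm (not_lt.mp h) (Finset.sum_nonneg fun i _ => hf i)
    simp [h0]

lemma aux_log_combine {p a b s q1 q2 r : ℝ}
    (hp : 0 < p) (ha : 0 < a) (hb : 0 < b) (hs : 0 < s)
    (h1 : 0 < q1) (h2 : 0 < q2) (hr : 0 < r)
    (hCI : p * s = a * b) :
    p * Real.log (a / (s * q1)) + p * Real.log (b / (s * q2))
      - p * Real.log (p / (s * r)) = p * Real.log (r / (q1 * q2)) := by
  have hp' : p = a * b / s := by
    rw [eq_div_iff hs.ne']; linarith
  have e1 : Real.log (a / (s * q1)) = Real.log a - Real.log s - Real.log q1 := by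
    rw [Real.log_div ha.ne' (mul_pos hs h1).ne', Real.log_mul hs.ne' h1.ne']; ring
  have e2 : Real.log (b / (s * q2)) = Real.log b - Real.log s - Real.log q2 := by
    rw [Real.log_div hb.ne' (mul_pos hs h2).ne', Real.log_mul hs.ne' h2.ne']; ring
  have e3 : Real.log (p / (s * r))
      = Real.log a + Real.log b - Real.log s - (Real.log s + Real.log r) := by
    rw [hp', Real.log_div (div_pos (mul_pos ha hb) hs).ne' (mul_pos hs hr).ne',
        Real.log_div (mul_pos ha hb).ne' hs.ne', Real.log_mul ha.ne' hb.ne',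
        Real.log_mul hs.ne' hr.ne']
  have e4 : Real.log (r / (q1 * q2)) = Real.log r - (Real.log q1 + Real.log q2) := by
    rw [Real.log_div hr.ne' (mul_pos h1 h2).ne', Real.log_mul h1.ne' h2.ne']
  rw [e1, e2, e3, e4]; ring

lemma mi1_eq {X Y₁ Y₂ : Type} [Fintype X] [Fintype Y₁] [Fintype Y₂]
    (P : X → Y₁ → Y₂ → ℝ) (hnn : ∀ x y₁ y₂, 0 ≤ P x y₁ y₂) :
    shannonMI (fun x y₁ => ∑ y₂, P x y₁ y₂) =
      ∑ x, ∑ y₁, ∑ y₂,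
        (if 0 < P x y₁ y₂ then
          P x y₁ y₂ * Real.log ((∑ y₂', P x y₁ y₂') /
            ((∑ y₁', ∑ y₂', P x y₁' y₂') * (∑ x', ∑ y₂', P x' y₁ y₂')))
        else 0) := by
  unfold shannonMI
  refine Finset.sum_congr rfl fun x _ => Finset.sum_congr rfl fun y₁ _ => ?_
  exact ite_sum_mul (fun y₂ => P x y₁ y₂) _ (fun y₂ => hnn x y₁ y₂)

lemma mi2_eq {X Y₁ Y₂ : Type} [Fintype X] [Fintype Y₁] [Fintype Y₂]
    (P : X → Y₁ → Y₂ → ℝ) (hnn : ∀ x y₁ y₂, 0 ≤ P x y₁ y₂) :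
    shannonMI (fun x y₂ => ∑ y₁, P x y₁ y₂) =
      ∑ x, ∑ y₁, ∑ y₂,
        (if 0 < P x y₁ y₂ then
          P x y₁ y₂ * Real.log ((∑ y₁', P x y₁' y₂) /
            ((∑ y₁', ∑ y₂', P x y₁' y₂') * (∑ x', ∑ y₁', P x' y₁' y₂)))
        else 0) := by
  simp only [shannonMI]
  refine Finset.sum_congr rfl fun x _ => ?_
  have hrow : (∑ b' : Y₂, ∑ y₁ : Y₁, P x y₁ b') = ∑ y₁' : Y₁, ∑ y₂' : Y₂, P x y₁' y₂' :=
    Finset.sum_comm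
  calc (∑ b : Y₂, if 0 < ∑ y₁ : Y₁, P x y₁ b then
          (∑ y₁ : Y₁, P x y₁ b) * Real.log ((∑ y₁ : Y₁, P x y₁ b) /
            ((∑ b' : Y₂, ∑ y₁ : Y₁, P x y₁ b') * (∑ a' : X, ∑ y₁ : Y₁, P a' y₁ b)))
        else 0)
      = ∑ b : Y₂, ∑ y₁ : Y₁, (if 0 < P x y₁ b then
          P x y₁ b * Real.log ((∑ y₁' : Y₁, P x y₁' b) /
            ((∑ y₁' : Y₁, ∑ y₂' : Y₂, P x y₁' y₂') * (∑ x' : X, ∑ y₁' : Y₁, P x' y₁' b)))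
        else 0) := by
        refine Finset.sum_congr rfl fun b _ => ?_
        rw [hrow]
        exact ite_sum_mul (fun y₁ => P x y₁ b) _ (fun y₁ => hnn x y₁ b)
    _ = _ := Finset.sum_comm

lemma mi12_eq {X Y₁ Y₂ : Type} [Fintype X] [Fintype Y₁] [Fintype Y₂]
    (P : X → Y₁ → Y₂ → ℝ) :
    shannonMI (fun x (p : Y₁ × Y₂) => P x p.1 p.2) =
      ∑ x, ∑ y₁, ∑ y₂,
        (if 0 < P x y₁ y₂ then
          P x y₁ y₂ * Real.log (P x y₁ y₂ /
            ((∑ y₁', ∑ y₂', P x y₁' y₂') * (∑ x', P x' y₁ y₂)))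
        else 0) := by
  unfold shannonMI
  refine Finset.sum_congr rfl fun x _ => ?_
  rw [Fintype.sum_prod_type]
  refine Finset.sum_congr rfl fun y₁ _ => Finset.sum_congr rfl fun y₂ _ => ?_
  rw [Fintype.sum_prod_type]

/-- composition theorem, α = 1: if `Y₁` and `Y₂` are
conditionally independent given `X`, then
`I(X;(Y₁,Y₂)) ≤ I(X;Y₁) + I(X;Y₂)`. -/
theorem shannonMI_composition {X Y₁ Y₂ : Type}
    [Fintype X] [Fintype Y₁] [Fintype Y₂] [Nonempty X] [Nonempty Y₁] [Nonempty Y₂]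
    (P : X → Y₁ → Y₂ → ℝ) (hP : IsPMF3 P)
    (hCI : ∀ x y₁ y₂, P x y₁ y₂ * (∑ y₁', ∑ y₂', P x y₁' y₂') =
      (∑ y₂', P x y₁ y₂') * (∑ y₁', P x y₁' y₂)) :
    shannonMI (fun x (p : Y₁ × Y₂) => P x p.1 p.2) ≤
      shannonMI (fun x y₁ => ∑ y₂, P x y₁ y₂) +
      shannonMI (fun x y₂ => ∑ y₁, P x y₁ y₂) := by
  obtain ⟨hnn, hsum⟩ := hP
  rw [← sub_nonneg, mi1_eq P hnn, mi2_eq P hnn, mi12_eq P]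
  -- abbreviations
  set q12 : Y₁ → Y₂ → ℝ := fun y₁ y₂ => ∑ x, P x y₁ y₂ with hq12
  set q1 : Y₁ → ℝ := fun y₁ => ∑ x, ∑ y₂, P x y₁ y₂ with hq1
  set q2 : Y₂ → ℝ := fun y₂ => ∑ x, ∑ y₁, P x y₁ y₂ with hq2
  have step1 :
      (∑ x, ∑ y₁, ∑ y₂,
        (if 0 < P x y₁ y₂ then
          P x y₁ y₂ * Real.log ((∑ y₂', P x y₁ y₂') /
            ((∑ y₁', ∑ y₂', P x y₁' y₂') * q1 y₁)) else 0)) +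
      (∑ x, ∑ y₁, ∑ y₂,
        (if 0 < P x y₁ y₂ then
          P x y₁ y₂ * Real.log ((∑ y₁', P x y₁' y₂) /
            ((∑ y₁', ∑ y₂', P x y₁' y₂') * q2 y₂)) else 0)) -
      (∑ x, ∑ y₁, ∑ y₂,
        (if 0 < P x y₁ y₂ then
          P x y₁ y₂ * Real.log (P x y₁ y₂ /
            ((∑ y₁', ∑ y₂', P x y₁' y₂') * q12 y₁ y₂)) else 0)) =
      ∑ x, ∑ y₁, ∑ y₂,
        (if 0 < P x y₁ y₂ then
          P x y₁ y₂ * Real.log (q12 y₁ y₂ / (q1 y₁ * q2 y₂)) else 0) := by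
    simp only [← Finset.sum_add_distrib, ← Finset.sum_sub_distrib]
    refine Finset.sum_congr rfl fun x _ => Finset.sum_congr rfl fun y₁ _ =>
      Finset.sum_congr rfl fun y₂ _ => ?_
    by_cases h : 0 < P x y₁ y₂
    · simp only [if_pos h]
      have hp1 : 0 < ∑ y₂', P x y₁ y₂' :=
        lt_of_lt_of_le h (Finset.single_le_sum (fun i _ => hnn x y₁ i) (Finset.mem_univ y₂))
      have hp2 : 0 < ∑ y₁', P x y₁' y₂ :=
        lt_of_lt_of_le h (Finset.single_le_sum (fun i _ => hnn x i y₂) (Finset.mem_univ y₁))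
      have hpx : 0 < ∑ y₁', ∑ y₂', P x y₁' y₂' :=
        lt_of_lt_of_le hp1 (Finset.single_le_sum
          (fun i _ => Finset.sum_nonneg fun j _ => hnn x i j) (Finset.mem_univ y₁))
      have hq12p : 0 < q12 y₁ y₂ :=
        lt_of_lt_of_le h (Finset.single_le_sum (fun i _ => hnn i y₁ y₂) (Finset.mem_univ x))
      have hq1p : 0 < q1 y₁ :=
        lt_of_lt_of_le hp1 (Finset.single_le_sum
          (fun i _ => Finset.sum_nonneg fun j _ => hnn i y₁ j) (Finset.mem_univ x))
      have hq2p : 0 < q2 y₂ :=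
        lt_of_lt_of_le hp2 (Finset.single_le_sum
          (fun i _ => Finset.sum_nonneg fun j _ => hnn i j y₂) (Finset.mem_univ x))
      exact aux_log_combine h hp1 hp2 hpx hq1p hq2p hq12p (hCI x y₁ y₂)
    · simp [h]
  rw [step1]
  have step2 :
      (∑ x, ∑ y₁, ∑ y₂,
        (if 0 < P x y₁ y₂ then
          P x y₁ y₂ * Real.log (q12 y₁ y₂ / (q1 y₁ * q2 y₂)) else 0)) =
      ∑ y₁, ∑ y₂,
        (if 0 < q12 y₁ y₂ then
          q12 y₁ y₂ * Real.log (q12 y₁ y₂ / (q1 y₁ * q2 y₂)) else 0) := by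
    rw [Finset.sum_comm]
    refine Finset.sum_congr rfl fun y₁ _ => ?_
    rw [Finset.sum_comm]
    refine Finset.sum_congr rfl fun y₂ _ => ?_
    exact (ite_sum_mul (fun x => P x y₁ y₂) _ (fun x => hnn x y₁ y₂)).symm
  rw [step2]
  -- nonnegativity of KL divergence
  have key : ∀ y₁ y₂, q12 y₁ y₂ - q1 y₁ * q2 y₂ ≤
      (if 0 < q12 y₁ y₂ then
        q12 y₁ y₂ * Real.log (q12 y₁ y₂ / (q1 y₁ * q2 y₂)) else 0) := by
    intro y₁ y₂
    by_cases h : 0 < q12 y₁ y₂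
    · rw [if_pos h]
      have hq1p : 0 < q1 y₁ := lt_of_lt_of_le h (Finset.sum_le_sum fun x _ =>
        Finset.single_le_sum (fun j _ => hnn x y₁ j) (Finset.mem_univ y₂))
      have hq2p : 0 < q2 y₂ := lt_of_lt_of_le h (Finset.sum_le_sum fun x _ =>
        Finset.single_le_sum (fun j _ => hnn x j y₂) (Finset.mem_univ y₁))
      have hlog : Real.log ((q1 y₁ * q2 y₂) / q12 y₁ y₂) ≤ (q1 y₁ * q2 y₂) / q12 y₁ y₂ - 1 :=
        Real.log_le_sub_one_of_pos (div_pos (mul_pos hq1p hq2p) h)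
      have hneg : Real.log (q12 y₁ y₂ / (q1 y₁ * q2 y₂)) =
          -Real.log ((q1 y₁ * q2 y₂) / q12 y₁ y₂) := by
        rw [← Real.log_inv, inv_div]
      have hd : q12 y₁ y₂ * ((q1 y₁ * q2 y₂) / q12 y₁ y₂) = q1 y₁ * q2 y₂ := by
        field_simp
      rw [hneg]
      nlinarith [mul_le_mul_of_nonneg_left hlog h.le]
    · rw [if_neg h]
      have h0 : q12 y₁ y₂ = 0 :=
        le_antisymm (not_lt.mp h) (Finset.sum_nonneg fun x _ => hnn x y₁ y₂)
      have : 0 ≤ q1 y₁ * q2 y₂ :=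
        mul_nonneg (Finset.sum_nonneg fun x _ => Finset.sum_nonneg fun j _ => hnn x y₁ j)
          (Finset.sum_nonneg fun x _ => Finset.sum_nonneg fun j _ => hnn x j y₂)
      linarith
  have hq12sum : ∑ y₁, ∑ y₂, q12 y₁ y₂ = 1 := by
    calc ∑ y₁, ∑ y₂, ∑ x, P x y₁ y₂
        = ∑ y₁, ∑ x, ∑ y₂, P x y₁ y₂ := Finset.sum_congr rfl fun _ _ => Finset.sum_comm
      _ = ∑ x, ∑ y₁, ∑ y₂, P x y₁ y₂ := Finset.sum_comm
      _ = 1 := hsum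
  have hq1sum : ∑ y₁, q1 y₁ = 1 := by
    calc ∑ y₁, ∑ x, ∑ y₂, P x y₁ y₂
        = ∑ x, ∑ y₁, ∑ y₂, P x y₁ y₂ := Finset.sum_comm
      _ = 1 := hsum
  have hq2sum : ∑ y₂, q2 y₂ = 1 := by
    calc ∑ y₂, ∑ x, ∑ y₁, P x y₁ y₂
        = ∑ x, ∑ y₂, ∑ y₁, P x y₁ y₂ := Finset.sum_comm
      _ = ∑ x, ∑ y₁, ∑ y₂, P x y₁ y₂ := Finset.sum_congr rfl fun _ _ => Finset.sum_comm
      _ = 1 := hsum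
  have hprod : ∑ y₁, ∑ y₂, q1 y₁ * q2 y₂ = 1 := by
    calc ∑ y₁, ∑ y₂, q1 y₁ * q2 y₂
        = ∑ y₁, q1 y₁ * ∑ y₂, q2 y₂ := Finset.sum_congr rfl fun _ _ => (Finset.mul_sum _ _ _).symm
      _ = ∑ y₁, q1 y₁ * 1 := by rw [hq2sum]
      _ = 1 := by simp [hq1sum]
  have hfinal : (0:ℝ) = ∑ y₁, ∑ y₂, (q12 y₁ y₂ - q1 y₁ * q2 y₂) := by
    simp only [Finset.sum_sub_distrib]
    rw [hq12sum, hprod]; ring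
  refine hfinal.le.trans ?_
  exact Finset.sum_le_sum fun y₁ _ => Finset.sum_le_sum fun y₂ _ => key y₁ y₂
end

section
/- Let 𝒳, 𝒴₁, 𝒴₂ be nonempty finite sets, W₁ a channel from 𝒳 to 𝒴₁, and W₂ a channel from 𝒳 to 𝒴₂. Then log ∑_{(y₁,y₂)∈𝒴₁×𝒴₂} max_{x∈𝒳} ( W₁(y₁|x)·W₂(y₂|x) ) ≤ log ∑_{y₁∈𝒴₁} max_{x∈𝒳} W₁(y₁|x) + log ∑_{y₂∈𝒴₂} max_{x∈𝒳} W₂(y₂|x); that is, the maximal leakage of the product channel is at most the sum of the individual maximal leakages. -/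
open Real BigOperators

/-- composition theorem, α = ∞: the maximal leakage of the
product channel is at most the sum of the individual maximal leakages. -/
theorem maximalLeakage_composition {X Y₁ Y₂ : Type}
    [Fintype X] [Fintype Y₁] [Fintype Y₂] [Nonempty X] [Nonempty Y₁] [Nonempty Y₂]
    (W₁ : X → Y₁ → ℝ) (hW₁ : ∀ x, IsPMF (W₁ x))
    (W₂ : X → Y₂ → ℝ) (hW₂ : ∀ x, IsPMF (W₂ x)) :
    Real.log (∑ p : Y₁ × Y₂, ⨆ x, W₁ x p.1 * W₂ x p.2) ≤
      Real.log (∑ y₁, ⨆ x, W₁ x y₁) + Real.log (∑ y₂, ⨆ x, W₂ x y₂) := by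
  obtain ⟨x₀⟩ := ‹Nonempty X›
  have bdd : ∀ {α : Type} (f : X → α → ℝ) (a : α), BddAbove (Set.range fun x => f x a) :=
    fun f a => (Set.finite_range _).bddAbove
  have bdd' : ∀ (p : Y₁ × Y₂), BddAbove (Set.range fun x => W₁ x p.1 * W₂ x p.2) :=
    fun p => (Set.finite_range _).bddAbove
  -- positivity of sums
  have h1 : (1:ℝ) ≤ ∑ y₁, ⨆ x, W₁ x y₁ := by
    calc (1:ℝ) = ∑ y₁, W₁ x₀ y₁ := ((hW₁ x₀).2).symm
    _ ≤ ∑ y₁, ⨆ x, W₁ x y₁ :=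
        Finset.sum_le_sum fun y _ => le_ciSup (bdd W₁ y) x₀
  have h2 : (1:ℝ) ≤ ∑ y₂, ⨆ x, W₂ x y₂ := by
    calc (1:ℝ) = ∑ y₂, W₂ x₀ y₂ := ((hW₂ x₀).2).symm
    _ ≤ ∑ y₂, ⨆ x, W₂ x y₂ :=
        Finset.sum_le_sum fun y _ => le_ciSup (bdd W₂ y) x₀
  have hS : (1:ℝ) ≤ ∑ p : Y₁ × Y₂, ⨆ x, W₁ x p.1 * W₂ x p.2 := by
    have : (1:ℝ) = ∑ p : Y₁ × Y₂, W₁ x₀ p.1 * W₂ x₀ p.2 := by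
      rw [Fintype.sum_prod_type, ← Finset.sum_mul_sum, (hW₁ x₀).2, (hW₂ x₀).2, one_mul]
    calc (1:ℝ) = ∑ p : Y₁ × Y₂, W₁ x₀ p.1 * W₂ x₀ p.2 := this
    _ ≤ ∑ p : Y₁ × Y₂, ⨆ x, W₁ x p.1 * W₂ x p.2 :=
        Finset.sum_le_sum fun p _ => le_ciSup (bdd' p) x₀
  -- key inequality
  have key : (∑ p : Y₁ × Y₂, ⨆ x, W₁ x p.1 * W₂ x p.2) ≤
      (∑ y₁, ⨆ x, W₁ x y₁) * (∑ y₂, ⨆ x, W₂ x y₂) := by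
    rw [Finset.sum_mul_sum]
    have : ∀ p : Y₁ × Y₂, (⨆ x, W₁ x p.1 * W₂ x p.2) ≤
        (⨆ x, W₁ x p.1) * (⨆ x, W₂ x p.2) := by
      intro p
      apply ciSup_le
      intro x
      have n1 : 0 ≤ ⨆ x, W₁ x p.1 := le_trans ((hW₁ x).1 p.1) (le_ciSup (bdd W₁ p.1) x)
      exact mul_le_mul (le_ciSup (bdd W₁ p.1) x) (le_ciSup (bdd W₂ p.2) x) ((hW₂ x).1 p.2) n1
    calc (∑ p : Y₁ × Y₂, ⨆ x, W₁ x p.1 * W₂ x p.2)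
        ≤ ∑ p : Y₁ × Y₂, (⨆ x, W₁ x p.1) * (⨆ x, W₂ x p.2) :=
          Finset.sum_le_sum fun p _ => this p
      _ = ∑ y₁, ∑ y₂, (⨆ x, W₁ x y₁) * (⨆ x, W₂ x y₂) := by
          rw [Fintype.sum_prod_type]
  calc Real.log (∑ p : Y₁ × Y₂, ⨆ x, W₁ x p.1 * W₂ x p.2)
      ≤ Real.log ((∑ y₁, ⨆ x, W₁ x y₁) * (∑ y₂, ⨆ x, W₂ x y₂)) :=
        Real.log_le_log (lt_of_lt_of_le one_pos hS) key
    _ = _ := Real.log_mul (by linarith) (by linarith)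
end
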